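/- arXiv:2405.04141 — 5 statements merged into one kernel-verified Lean document; each statement's English description precedes it below -/
import Mathlib

section
/- If G is a finite group isomorphic to the central product D₈^{∘n} of n copies of the dihedral group of order 8 (an extraspecial 2-group of order 2^{2n+1} and plus type), then the number of elements of order 2 in G is 4^n + 2^n − 1 and the number of elements of order 4 is 4^n − 2^n. -/
open Finset

open Finset

private lemma d8_sq' : ∀ x : DihedralGroup 4, x^2 = 1 ∨ x^2 = DihedralGroup.r 2 := by decide
private lemma d8_comm' : ∀ y : DihedralGroup 4, DihedralGroup.r 2 * y = y * DihedralGroup.r 2 := by decide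
private lemma d8_r2_ne' : (DihedralGroup.r 2 : DihedralGroup 4) ≠ 1 := by decide
private lemma d8_r2_sq' : ((DihedralGroup.r 2 : DihedralGroup 4))^2 = 1 := by decide
private lemma d8_center' : ∀ x : DihedralGroup 4, (∀ y, x * y = y * x) → x = 1 ∨ x = DihedralGroup.r 2 := by decide
private lemma d8_pow4' : ∀ x : DihedralGroup 4, x^4 = 1 := by decide
private lemma d8_card' : Nat.card (DihedralGroup 4) = 8 := by
  rw [Nat.card_eq_fintype_card, DihedralGroup.card]
private lemma d8_sq_count' : Nat.card {x : DihedralGroup 4 // x^2 = 1} = 6 := by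
  rw [Nat.card_eq_fintype_card]; decide

private lemma noncommProd_central_pow {G : Type*} [Group G] {ι : Type*} [DecidableEq ι]
    {f : ι → G} {z : G} (h : ∀ i, f i = 1 ∨ f i = z) (s : Finset ι)
    [DecidablePred fun i => ¬ f i = 1]
    (comm : (↑s : Set ι).Pairwise (Function.onFun Commute f)) :
    s.noncommProd f comm = z ^ (s.filter fun i => ¬ f i = 1).card := by
  induction s using Finset.induction_on with
  | empty => simp
  | @insert a s ha ih =>
    rw [Finset.noncommProd_insert_of_notMem _ _ _ _ ha,
      ih ((comm.mono (by simp [Finset.coe_subset]))), Finset.filter_insert]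
    rcases h a with h1 | h1
    · rw [if_neg (by simp [h1]), h1, one_mul]
    · by_cases hz1 : z = 1
      · simp only [h1, hz1, one_mul, one_pow]
      · rw [if_pos (by simp [h1, hz1]), Finset.card_insert_of_notMem (by simp [ha]), h1,
          pow_succ]
        exact ((Commute.refl z).pow_right _).eq

open Finset

private lemma card_comp_eq {P G : Type*} [Group P] [Group G] [Finite P] (φ : P →* G)
    (hφ : Function.Surjective φ) (p : G → Prop) :
    Nat.card {t : P // p (φ t)} = Nat.card {x : G // p x} * Nat.card φ.ker := by
  haveI : Finite G := Finite.of_surjective φ hφ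
  classical
  haveI := Fintype.ofFinite P
  haveI := Fintype.ofFinite G
  let e : {t : P // p (φ t)} ≃ Σ y : {x : G // p x}, (φ ⁻¹' {y.1}) :=
    { toFun := fun t => ⟨⟨φ t.1, t.2⟩, ⟨t.1, rfl⟩⟩
      invFun := fun s => ⟨s.2.1, by
        rw [show φ s.2.1 = s.1.1 from s.2.2]; exact s.1.2⟩
      left_inv := fun t => rfl
      right_inv := fun s => by
        rcases s with ⟨⟨y, hy⟩, ⟨t, ht⟩⟩
        simp only [Set.mem_singleton_iff] at ht
        subst ht
        rfl }
  rw [Nat.card_congr e, Nat.card_eq_fintype_card, Fintype.card_sigma]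
  have hfib : ∀ y : {x : G // p x}, Fintype.card (φ ⁻¹' {y.1}) = Nat.card φ.ker := by
    intro y
    rw [← Nat.card_eq_fintype_card]
    exact Nat.card_congr (MonoidHom.fiberEquivKerOfSurjective hφ y.1)
  simp_rw [hfib]
  simp [Nat.card_eq_fintype_card]

private lemma parity_count {ι : Type*} [Fintype ι] [DecidableEq ι] {α : ι → Type*}
    [∀ i, Fintype (α i)] [∀ i, DecidableEq (α i)] (p : ∀ i, α i → Prop)
    [∀ i, DecidablePred (p i)] :
    (2 : ℤ) * Nat.card {t : ∀ i, α i // Even ((Finset.univ.filter fun i => ¬ p i (t i)).card)}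
      = (∏ i, (((Finset.univ.filter (p i)).card : ℤ) + ((Finset.univ.filter fun x => ¬ p i x).card : ℤ)))
      + (∏ i, (((Finset.univ.filter (p i)).card : ℤ) - ((Finset.univ.filter fun x => ¬ p i x).card : ℤ))) := by
  classical
  set w : (∀ i, α i) → ℕ := fun t => (Finset.univ.filter fun i => ¬ p i (t i)).card with hw
  have key : ∑ t : ∀ i, α i, ((-1 : ℤ)) ^ (w t)
      = ∏ i, ((((Finset.univ.filter (p i)).card : ℤ)) - ((Finset.univ.filter fun x => ¬ p i x).card : ℤ)) := by
    have h1 : ∀ i, (((Finset.univ.filter (p i)).card : ℤ)) - ((Finset.univ.filter fun x => ¬ p i x).card : ℤ)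
        = ∑ x : α i, (if p i x then (1 : ℤ) else -1) := by
      intro i
      rw [Finset.sum_ite, Finset.sum_const, Finset.sum_const]
      push_cast
      ring
    rw [Finset.prod_congr rfl fun i _ => h1 i, Finset.prod_univ_sum]
    rw [Fintype.piFinset_univ]
    refine Finset.sum_congr rfl fun t _ => ?_
    rw [Finset.prod_ite, Finset.prod_const, Finset.prod_const, one_pow, one_mul]
  have h2 : ∀ t : ∀ i, α i, ((-1 : ℤ)) ^ (w t) = (if Even (w t) then (1:ℤ) else -1) := by
    intro t
    by_cases h : Even (w t)
    · rw [if_pos h, h.neg_one_pow]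
    · rw [if_neg h, (Nat.not_even_iff_odd.mp h).neg_one_pow]
  rw [Finset.sum_congr rfl fun t _ => h2 t] at key
  rw [Finset.sum_ite, Finset.sum_const, Finset.sum_const] at key
  have h3 : (Finset.univ.filter fun t : ∀ i, α i => Even (w t)).card
      + (Finset.univ.filter fun t : ∀ i, α i => ¬ Even (w t)).card
      = ∏ i, ((Finset.univ.filter (p i)).card + (Finset.univ.filter fun x => ¬ p i x).card) := by
    rw [Finset.card_filter_add_card_filter_not, Finset.card_univ, Fintype.card_pi]
    refine Finset.prod_congr rfl fun i _ => ?_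
    rw [← Finset.card_univ]
    exact (Finset.card_filter_add_card_filter_not (p := p i)).symm
  have h4 : Nat.card {t : ∀ i, α i // Even (w t)}
      = (Finset.univ.filter fun t : ∀ i, α i => Even (w t)).card := by
    rw [Nat.card_eq_fintype_card, Fintype.card_subtype]
  rw [h4]
  simp only [nsmul_eq_mul, mul_one, mul_neg] at key
  push_cast at key h3 ⊢
  linarith [key, h3]

private lemma eq_of_mem_card_two {G : Type*} [Group G] {K : Subgroup G} [Finite K]
    (h : Nat.card K = 2) {x y : G} (hx : x ∈ K) (hy : y ∈ K)
    (hx1 : x ≠ 1) (hy1 : y ≠ 1) : x = y := by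
  classical
  haveI := Fintype.ofFinite K
  by_contra hxy
  have hsub : ({⟨1, K.one_mem⟩, ⟨x, hx⟩, ⟨y, hy⟩} : Finset K) ⊆ Finset.univ :=
    Finset.subset_univ _
  have hcard3 : ({⟨1, K.one_mem⟩, ⟨x, hx⟩, ⟨y, hy⟩} : Finset K).card = 3 := by
    rw [Finset.card_insert_of_notMem, Finset.card_insert_of_notMem, Finset.card_singleton]
    · simp [Subtype.ext_iff, hxy]
    · simp [Subtype.ext_iff, Ne.symm hx1, Ne.symm hy1]
  have := Finset.card_le_card hsub
  rw [hcard3, Finset.card_univ, ← Nat.card_eq_fintype_card, h] at this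
  omega

private lemma coe_pow_eq_one_iff {G : Type*} [Group G] {K : Subgroup G} (x : K) (m : ℕ) :
    ((x : G)) ^ m = 1 ↔ x ^ m = 1 := by
  rw [← SubmonoidClass.coe_pow, OneMemClass.coe_eq_one]



/-- The number of elements of order `m` in a group `H`. -/
noncomputable def numOfOrder (H : Type*) [Group H] (m : ℕ) : ℕ :=
  Nat.card {x : H // orderOf x = m}

/-- `G` is the (internal) central product of the family of subgroups `H`:
the subgroups pairwise commute elementwise and generate `G`. -/
def IsCentralProduct {G : Type*} [Group G] {ι : Type*} (H : ι → Subgroup G) : Prop :=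
  (∀ i j, i ≠ j → ∀ x ∈ H i, ∀ y ∈ H j, Commute x y) ∧ (⨆ i, H i) = ⊤

/-- If `G ≅ D₈^{∘n}` (the central product of `n` copies of the dihedral group of
order 8, which is the extraspecial 2-group of order `2^(2n+1)` of plus type), then
`n₂(G) = 4^n + 2^n − 1` and `n₄(G) = 4^n − 2^n`. -/
theorem card_orders_of_D8_central_power {n : ℕ} (hn : 1 ≤ n)
    (G : Type*) [Group G] [Fintype G]
    (H : Fin n → Subgroup G)
    (hcp : IsCentralProduct H)
    (hD8 : ∀ i, Nonempty (H i ≃* DihedralGroup 4))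
    (hcard : Nat.card G = 2 ^ (2 * n + 1)) :
    numOfOrder G 2 = 4 ^ n + 2 ^ n - 1 ∧ numOfOrder G 4 = 4 ^ n - 2 ^ n := by
  classical
  obtain ⟨hcomm, hsup⟩ := hcp
  have e : ∀ i, H i ≃* DihedralGroup 4 := fun i => (hD8 i).some
  set zz : ∀ i, H i := fun i => (e i).symm (DihedralGroup.r 2) with hzzdef
  set z : Fin n → G := fun i => (zz i : G) with hzdef
  have hezz : ∀ i, (e i) (zz i) = DihedralGroup.r 2 := by
    intro i; simp [hzzdef]
  have hzz_ne : ∀ i, zz i ≠ 1 := by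
    intro i h
    apply d8_r2_ne'
    rw [← hezz i, h, map_one]
  have hz_ne : ∀ i, z i ≠ 1 := by
    intro i h
    exact hzz_ne i (Subtype.ext h)
  have hzz_sq : ∀ i, (zz i) ^ 2 = 1 := by
    intro i
    apply (e i).injective
    rw [map_pow, hezz i, map_one]
    exact d8_r2_sq'
  have hz_sq : ∀ i, (z i) ^ 2 = 1 := by
    intro i
    exact (coe_pow_eq_one_iff (zz i) 2).mpr (hzz_sq i)
  have hmemsq : ∀ i (x : H i), x ^ 2 = 1 ∨ x ^ 2 = zz i := by
    intro i x
    rcases d8_sq' (e i x) with h | h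
    · left; apply (e i).injective; rw [map_pow, h, map_one]
    · right; apply (e i).injective; rw [map_pow, h, hezz i]
  have hzz_comm : ∀ i (y : H i), zz i * y = y * zz i := by
    intro i y
    apply (e i).injective
    rw [map_mul, map_mul, hezz i]
    exact d8_comm' _
  -- the canonical homomorphism from the direct product
  have hpw : Pairwise fun i j => ∀ (x y : G), x ∈ H i → y ∈ H j → Commute x y :=
    fun i j hij x y hx hy => hcomm i j hij x hx y hy
  have hpw2 : Pairwise fun i j => ∀ (x : H i) (y : H j),
      Commute ((H i).subtype x) ((H j).subtype y) :=
    Subgroup.commute_subtype_of_commute hpw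
  set φ : (∀ i, H i) →* G := MonoidHom.noncommPiCoprod (fun i => (H i).subtype)
    hpw2 with hφdef
  have hφsurj : Function.Surjective φ := by
    rw [← MonoidHom.range_eq_top, hφdef, MonoidHom.noncommPiCoprod_range]
    simpa [Subgroup.range_subtype] using hsup
  have hcard8 : ∀ i, Nat.card (H i) = 8 := fun i =>
    (Nat.card_congr (e i).toEquiv).trans d8_card'
  have hcardP : Nat.card (∀ i, H i) = 2 ^ (3 * n) := by
    rw [Nat.card_pi]
    simp only [hcard8]
    rw [Finset.prod_const, Finset.card_univ, Fintype.card_fin,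
      show (8 : ℕ) = 2 ^ 3 by norm_num, ← pow_mul]
  have hcardKer : Nat.card φ.ker = 2 ^ (n - 1) := by
    have h1 : Nat.card (∀ i, H i) = Nat.card G * Nat.card φ.ker := by
      rw [Subgroup.card_eq_card_quotient_mul_card_subgroup φ.ker]
      congr 1
      exact Nat.card_congr (QuotientGroup.quotientKerEquivOfSurjective φ hφsurj).toEquiv
    rw [hcardP, hcard] at h1
    rw [show (2:ℕ) ^ (3 * n) = 2 ^ (2 * n + 1) * 2 ^ (n - 1) by
      rw [← pow_add]; congr 1; omega] at h1
    exact (Nat.eq_of_mul_eq_mul_left (by positivity) h1.symm)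
  -- Step A : kernel elements have central components
  have stepA : ∀ t : ∀ i, H i, φ t = 1 → ∀ i, t i = 1 ∨ t i = zz i := by
    intro t ht i
    have hdecomp : t = Pi.mulSingle i (t i) * Function.update t i 1 := by
      funext j
      by_cases hj : j = i
      · subst hj; simp
      · simp [Pi.mulSingle, Function.update, hj]
    have hu : φ (Function.update t i 1) ∈ Subgroup.centralizer (H i : Set G) := by
      rw [hφdef, MonoidHom.noncommPiCoprod_apply]
      apply Subgroup.noncommProd_mem
      intro j _
      by_cases hj : j = i
      · subst hj
        simp only [Function.update_self, map_one]
        exact Subgroup.one_mem _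
      · rw [Function.update_of_ne hj]
        rw [Subgroup.mem_centralizer_iff]
        intro g hg
        exact (hcomm i j (fun h => hj h.symm) g hg _ (t j).2).eq
    have hms : φ (Pi.mulSingle i (t i)) = (t i : G) := by
      rw [hφdef]
      exact MonoidHom.noncommPiCoprod_mulSingle _ _ _
    have h1 : (t i : G) * φ (Function.update t i 1) = 1 := by
      rw [← hms, ← map_mul, ← hdecomp, ht]
    have hti : (t i : G) ∈ Subgroup.centralizer (H i : Set G) := by
      rw [eq_inv_of_mul_eq_one_left h1]
      exact inv_mem hu
    have hcommHi : ∀ y : H i, t i * y = y * t i := by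
      intro y
      have h2 := Subgroup.mem_centralizer_iff.mp hti y.1 y.2
      exact Subtype.ext (by push_cast; exact h2.symm)
    have hd : ∀ w : DihedralGroup 4, (e i) (t i) * w = w * (e i) (t i) := by
      intro w
      have h3 := congrArg (e i) (hcommHi ((e i).symm w))
      rw [map_mul, map_mul] at h3
      simpa using h3
    rcases d8_center' _ hd with h4 | h4
    · left; apply (e i).injective; rw [h4, map_one]
    · right; apply (e i).injective; rw [h4, hezz i]
  -- the z i are central
  have hz_central : ∀ i (g : G), g * z i = z i * g := by
    intro i g
    have hg : g ∈ ⨆ j, H j := by rw [hsup]; trivial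
    have hle : (⨆ j, H j) ≤ Subgroup.centralizer {z i} := by
      apply iSup_le
      intro j y hy
      rw [Subgroup.mem_centralizer_iff]
      intro g' hg'
      rw [Set.mem_singleton_iff] at hg'
      subst hg'
      by_cases hj : j = i
      · subst hj
        have h5 := congrArg Subtype.val (hzz_comm j ⟨y, hy⟩)
        push_cast at h5
        exact h5
      · exact (hcomm i j (fun h => hj h.symm) (z i) (zz i).2 y hy).eq
    have h6 := Subgroup.mem_centralizer_iff.mp (hle hg) (z i) rfl
    exact h6.symm
  -- Step B : all the z i coincide
  have hZMod : ∀ u : ZMod 2, u = 0 ∨ u = 1 := by decide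
  have hzzmul : ∀ i, zz i * zz i = 1 := by
    intro i; rw [← pow_two]; exact hzz_sq i
  set Bf : (Fin n → ZMod 2) → (∀ i, H i) := fun b i => if b i = 1 then zz i else 1 with hBfdef
  have hBmul : ∀ b c : Fin n → ZMod 2, Bf (b + c) = Bf b * Bf c := by
    intro b c
    funext i
    simp only [hBfdef, Pi.add_apply, Pi.mul_apply]
    rcases hZMod (b i) with h1 | h1 <;> rcases hZMod (c i) with h2 | h2 <;>
      simp [h1, h2, show (1 + 1 : ZMod 2) = 0 from by decide,
        show (0 : ZMod 2) ≠ 1 from by decide, hzzmul i]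
  set ψ : Multiplicative (Fin n → ZMod 2) →* G :=
    MonoidHom.mk' (fun b => φ (Bf (Multiplicative.toAdd b)))
      (fun b c => by
        simp only [toAdd_mul, hBmul, map_mul]) with hψdef
  have hψ_apply : ∀ b : Fin n → ZMod 2, ψ (Multiplicative.ofAdd b) = φ (Bf b) := fun b => rfl
  have hBt : ∀ t : ∀ i, H i, φ t = 1 →
      Bf (fun i => if t i = 1 then 0 else 1) = t := by
    intro t ht
    funext i
    rcases stepA t ht i with h | h
    · simp [hBfdef, h, show (0 : ZMod 2) ≠ 1 from by decide]
    · simp [hBfdef, h, hzz_ne i]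
  have hkerequiv : Nat.card ψ.ker = Nat.card φ.ker := by
    apply Nat.card_congr
    refine
      { toFun := fun b => ⟨Bf (Multiplicative.toAdd b.1), ?_⟩
        invFun := fun t =>
          ⟨Multiplicative.ofAdd (fun i => if (t : ∀ i, H i) i = 1 then 0 else 1), ?_⟩
        left_inv := ?_
        right_inv := ?_ }
    · exact MonoidHom.mem_ker.mpr (MonoidHom.mem_ker.mp b.2)
    · exact MonoidHom.mem_ker.mpr (by
        rw [hψ_apply, hBt _ (MonoidHom.mem_ker.mp t.2)]
        exact MonoidHom.mem_ker.mp t.2)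
    · intro b
      apply Subtype.ext
      show Multiplicative.ofAdd _ = b.1
      rw [show b.1 = Multiplicative.ofAdd (Multiplicative.toAdd b.1) from rfl]
      refine congrArg _ (funext fun i => ?_)
      rcases hZMod (Multiplicative.toAdd b.1 i) with h | h
      · simp [hBfdef, h, show (0 : ZMod 2) ≠ 1 from by decide]
      · simp [hBfdef, h, hzz_ne i]
    · intro t
      apply Subtype.ext
      exact hBt t.1 (MonoidHom.mem_ker.mp t.2)
  have hcardDom : Nat.card (Multiplicative (Fin n → ZMod 2)) = 2 ^ n := by
    rw [Nat.card_eq_fintype_card, Fintype.card_multiplicative, Fintype.card_pi]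
    simp [ZMod.card]
  have hrange2 : Nat.card ψ.range = 2 := by
    have h1 : Nat.card (Multiplicative (Fin n → ZMod 2))
        = Nat.card ψ.range * Nat.card ψ.ker := by
      rw [Subgroup.card_eq_card_quotient_mul_card_subgroup ψ.ker]
      congr 1
      exact Nat.card_congr (QuotientGroup.quotientKerEquivRange ψ).toEquiv
    rw [hcardDom, hkerequiv, hcardKer] at h1
    rw [show (2:ℕ) ^ n = 2 * 2 ^ (n - 1) by
      rw [← pow_succ']; congr 1; omega] at h1
    exact (Nat.eq_of_mul_eq_mul_right (by positivity) h1).symm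
  have hzrange : ∀ i, z i ∈ ψ.range := by
    intro i
    refine ⟨Multiplicative.ofAdd (Pi.single i 1), ?_⟩
    rw [hψ_apply]
    have hBs : Bf (Pi.single i 1) = Pi.mulSingle i (zz i) := by
      funext j
      by_cases hj : j = i
      · subst hj; simp [hBfdef]
      · simp [hBfdef, hj, Pi.single_eq_of_ne hj, Pi.mulSingle_eq_of_ne hj,
          show (0 : ZMod 2) ≠ 1 from by decide]
    rw [hBs, hφdef]
    exact MonoidHom.noncommPiCoprod_mulSingle _ _ _
  have hzeq : ∀ i j, z i = z j := fun i j =>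
    eq_of_mem_card_two hrange2 (hzrange i) (hzrange j) (hz_ne i) (hz_ne j)
  -- the common central involution
  have hi0 : 0 < n := hn
  set i0 : Fin n := ⟨0, hi0⟩ with hi0def
  set z0 : G := z i0 with hz0def
  have horder : orderOf z0 = 2 := orderOf_eq_prime (hz_sq i0) (hz_ne i0)
  have hallsq : ∀ (i) (x : H i), ((x : G)) ^ 2 = 1 ∨ ((x : G)) ^ 2 = z0 := by
    intro i x
    rcases hmemsq i x with h | h
    · left
      exact (coe_pow_eq_one_iff x 2).mpr h
    · right
      have h' : ((x : G)) ^ 2 = z i := by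
        rw [← SubmonoidClass.coe_pow, h]
      rw [h', hz0def]
      exact (hzeq i0 i).symm
  -- condition for squaring to 1
  have hcond : ∀ t : ∀ i, H i,
      ((φ t) ^ 2 = 1 ↔ Even ((Finset.univ.filter fun i => ¬ ((t i : G)) ^ 2 = 1).card)) := by
    intro t
    have h2 : φ (t ^ 2) = z0 ^ ((Finset.univ.filter fun i => ¬ ((t i : G)) ^ 2 = 1).card) := by
      rw [hφdef, MonoidHom.noncommPiCoprod_apply]
      have hfun : ∀ j ∈ Finset.univ, (H j).subtype ((t ^ 2) j) = ((t j : G)) ^ 2 := by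
        intro j _
        simp [Pi.pow_apply]
      rw [Finset.noncommProd_congr rfl hfun]
      exact noncommProd_central_pow (fun j => hallsq j (t j)) _ _
    rw [map_pow] at h2
    rw [h2, ← orderOf_dvd_iff_pow_eq_one, horder]
    exact (even_iff_two_dvd).symm
  -- counting
  have hcount1 : Nat.card {t : ∀ i, H i // (φ t) ^ 2 = 1}
      = Nat.card {x : G // x ^ 2 = 1} * 2 ^ (n - 1) := by
    rw [← hcardKer]
    exact card_comp_eq φ hφsurj (fun x => x ^ 2 = 1)
  have ha : ∀ i : Fin n, ((Finset.univ.filter fun x : H i => ((x : G)) ^ 2 = 1).card) = 6 := by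
    intro i
    rw [← Fintype.card_subtype, ← Nat.card_eq_fintype_card]
    have e2 : {x : H i // ((x : G)) ^ 2 = 1} ≃ {x : DihedralGroup 4 // x ^ 2 = 1} := by
      refine (e i).toEquiv.subtypeEquiv fun x => ?_
      show ((x : G)) ^ 2 = 1 ↔ ((e i) x) ^ 2 = 1
      rw [coe_pow_eq_one_iff x 2, ← map_pow]
      constructor
      · intro hx; rw [hx, map_one]
      · intro hx; exact (e i).injective (by rw [hx, map_one])
    rw [Nat.card_congr e2]
    exact d8_sq_count'
  have hb : ∀ i : Fin n, ((Finset.univ.filter fun x : H i => ¬ ((x : G)) ^ 2 = 1).card) = 2 := by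
    intro i
    have h8 : Fintype.card (H i) = 8 := by rw [← Nat.card_eq_fintype_card]; exact hcard8 i
    have hsd : (Finset.univ.filter fun x : H i => ¬ ((x : G)) ^ 2 = 1)
        = Finset.univ \ (Finset.univ.filter fun x : H i => ((x : G)) ^ 2 = 1) := by
      ext x; simp
    rw [hsd, Finset.card_sdiff_of_subset (Finset.filter_subset _ _), Finset.card_univ, h8, ha i]
  have hcount2 : (2 : ℤ) * Nat.card {t : ∀ i, H i // (φ t) ^ 2 = 1} = 8 ^ n + 4 ^ n := by
    have hsubcongr : Nat.card {t : ∀ i, H i // (φ t) ^ 2 = 1}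
        = Nat.card {t : ∀ i, H i //
            Even ((Finset.univ.filter fun i => ¬ ((t i : G)) ^ 2 = 1).card)} :=
      Nat.card_congr (Equiv.subtypeEquivRight fun t => hcond t)
    rw [hsubcongr, parity_count (fun (i : Fin n) (x : H i) => ((x : G)) ^ 2 = 1)]
    simp only [ha, hb]
    norm_num
  -- the number of solutions of x^2 = 1
  have hS : Nat.card {x : G // x ^ 2 = 1} = 4 ^ n + 2 ^ n := by
    rw [hcount1] at hcount2
    have h7 : 2 * (Nat.card {x : G // x ^ 2 = 1} * 2 ^ (n - 1)) = 8 ^ n + 4 ^ n := by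
      exact_mod_cast hcount2
    have e1 : (8 : ℕ) ^ n = 2 ^ n * 4 ^ n := by
      rw [show (8 : ℕ) = 2 * 4 from rfl, mul_pow]
    have e2 : (4 : ℕ) ^ n = 2 ^ n * 2 ^ n := by
      rw [show (4 : ℕ) = 2 * 2 from rfl, mul_pow]
    have e3 : 2 * 2 ^ (n - 1) = (2 : ℕ) ^ n := by
      rw [← pow_succ']; congr 1; omega
    have h10 : 2 ^ n * Nat.card {x : G // x ^ 2 = 1} = 2 ^ n * (4 ^ n + 2 ^ n) := by
      calc 2 ^ n * Nat.card {x : G // x ^ 2 = 1}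
          = 2 * 2 ^ (n - 1) * Nat.card {x : G // x ^ 2 = 1} := by rw [e3]
        _ = 2 * (Nat.card {x : G // x ^ 2 = 1} * 2 ^ (n - 1)) := by ring
        _ = 8 ^ n + 4 ^ n := h7
        _ = 2 ^ n * (4 ^ n + 2 ^ n) := by rw [mul_add, ← e1, ← e2]
    exact Nat.eq_of_mul_eq_mul_left (by positivity) h10
  -- every element has order dividing 4
  have hpow4 : ∀ x : G, x ^ 4 = 1 := by
    intro x
    obtain ⟨t, rfl⟩ := hφsurj x
    rw [← map_pow]
    have ht4 : t ^ 4 = 1 := by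
      funext i
      show (t i) ^ 4 = 1
      apply (e i).injective
      rw [map_pow, map_one]
      exact d8_pow4' _
    rw [ht4, map_one]
  have hdvd : ∀ x : G, orderOf x = 1 ∨ orderOf x = 2 ∨ orderOf x = 4 := by
    intro x
    have h1 : orderOf x ∣ 2 ^ 2 := by
      rw [show (2:ℕ) ^ 2 = 4 by norm_num]
      exact orderOf_dvd_of_pow_eq_one (hpow4 x)
    rcases (Nat.dvd_prime_pow Nat.prime_two).mp h1 with ⟨k, hk, hke⟩
    interval_cases k
    · left; simpa using hke
    · right; left; simpa using hke
    · right; right; rw [hke]; norm_num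
  -- split into orders
  have hsq_iff : ∀ x : G, x ^ 2 = 1 ↔ (orderOf x = 1 ∨ orderOf x = 2) := by
    intro x
    constructor
    · intro hx
      have h1 : orderOf x ∣ 2 := orderOf_dvd_of_pow_eq_one hx
      exact (Nat.dvd_prime Nat.prime_two).mp h1
    · rintro (h | h)
      · rw [orderOf_eq_one_iff.mp h, one_pow]
      · rw [← h]; exact pow_orderOf_eq_one x
  have hnum : ∀ m : ℕ, numOfOrder G m = (Finset.univ.filter fun x : G => orderOf x = m).card := by
    intro m
    rw [numOfOrder, Nat.card_eq_fintype_card, Fintype.card_subtype]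
  have hF1 : (Finset.univ.filter fun x : G => orderOf x = 1).card = 1 := by
    rw [show (Finset.univ.filter fun x : G => orderOf x = 1) = {1} by
      ext x; simp [orderOf_eq_one_iff], Finset.card_singleton]
  have hsplit : Nat.card {x : G // x ^ 2 = 1}
      = (Finset.univ.filter fun x : G => orderOf x = 1).card
        + (Finset.univ.filter fun x : G => orderOf x = 2).card := by
    rw [Nat.card_eq_fintype_card, Fintype.card_subtype]
    rw [show (Finset.univ.filter fun x : G => x ^ 2 = 1)
        = Finset.univ.filter fun x : G => (orderOf x = 1 ∨ orderOf x = 2) by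
      ext x; simp [hsq_iff x]]
    rw [Finset.filter_or]
    exact Finset.card_union_of_disjoint
      (Finset.disjoint_filter.mpr fun x _ h1 h2 => by omega)
  have htotal : (Finset.univ.filter fun x : G => orderOf x = 1).card
      + (Finset.univ.filter fun x : G => orderOf x = 2).card
      + (Finset.univ.filter fun x : G => orderOf x = 4).card = 2 ^ (2 * n + 1) := by
    have hpart : (Finset.univ.filter fun x : G => (orderOf x = 1 ∨ orderOf x = 2 ∨ orderOf x = 4))
        = (Finset.univ : Finset G) := by
      ext x; simpa using hdvd x
    have h := congrArg Finset.card hpart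
    have hd1 : Disjoint (Finset.univ.filter fun x : G => orderOf x = 2)
        (Finset.univ.filter fun x : G => orderOf x = 4) :=
      Finset.disjoint_filter.mpr fun x _ h1 h2 => by omega
    have hd2 : Disjoint (Finset.univ.filter fun x : G => orderOf x = 1)
        ((Finset.univ.filter fun x : G => orderOf x = 2)
          ∪ (Finset.univ.filter fun x : G => orderOf x = 4)) := by
      rw [Finset.disjoint_union_right]
      exact ⟨Finset.disjoint_filter.mpr fun x _ h1 h2 => by omega,
        Finset.disjoint_filter.mpr fun x _ h1 h2 => by omega⟩
    rw [Finset.filter_or, Finset.filter_or, Finset.card_union_of_disjoint hd2,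
      Finset.card_union_of_disjoint hd1, Finset.card_univ] at h
    have hcard' : Fintype.card G = 2 ^ (2 * n + 1) := by
      rw [← Nat.card_eq_fintype_card, hcard]
    omega
  have h2n : (2:ℕ) ^ (2 * n + 1) = 2 * 4 ^ n := by
    rw [pow_succ, pow_mul, show (2:ℕ) ^ 2 = 4 from by norm_num]
    ring
  have hle : (2:ℕ) ^ n ≤ 4 ^ n := Nat.pow_le_pow_left (by norm_num) n
  have h1le : 1 ≤ (4:ℕ) ^ n := Nat.one_le_pow _ _ (by norm_num)
  rw [hS, hF1] at hsplit
  rw [hF1, h2n] at htotal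
  rw [hnum 2, hnum 4]
  omega
end

section
/- Let G be an (almost) extraspecial 2-group of order 2^m, written as G ≅ D₈ ∘ G' where G' is an (almost) extraspecial 2-group of order 2^{m−2} (m ≥ 5). Then n₂(G) = 2^{m−2} + 2·n₂(G') + 1, where n₂ denotes the number of elements of order 2. -/
/-- A finite `p`-group `G` is extraspecial if `G' = Z(G) = Φ(G)` has order `p`. -/
def IsExtraspecial (p : ℕ) (G : Type*) [Group G] : Prop :=
  IsPGroup p G ∧ commutator G = Subgroup.center G ∧ commutator G = frattini G ∧
    Nat.card (commutator G) = p

/-- A finite `p`-group `G` is almost extraspecial if `G' = Φ(G)` has order `p`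
and `Z(G)` is cyclic of order `p²`. -/
def IsAlmostExtraspecial (p : ℕ) (G : Type*) [Group G] : Prop :=
  IsPGroup p G ∧ commutator G = frattini G ∧ Nat.card (commutator G) = p ∧
    IsCyclic (Subgroup.center G) ∧ Nat.card (Subgroup.center G) = p ^ 2

open Subgroup

lemma aux_eq_of_card_two {X : Type*} [Group X] {S : Subgroup X} (hS : Nat.card S = 2)
    {a b : X} (ha : a ∈ S) (hb : b ∈ S) (ha1 : a ≠ 1) (hb1 : b ≠ 1) : a = b := by
  obtain ⟨y, -, hy⟩ := (Nat.card_eq_two_iff' (1 : S)).mp hS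
  have h1 : (⟨a, ha⟩ : S) = y := hy ⟨a, ha⟩ (by simpa [Subtype.ext_iff] using ha1)
  have h2 : (⟨b, hb⟩ : S) = y := hy ⟨b, hb⟩ (by simpa [Subtype.ext_iff] using hb1)
  exact Subtype.ext_iff.mp (h1.trans h2.symm)

lemma aux_sq_one_of_card_two {X : Type*} [Group X] {S : Subgroup X} (hS : Nat.card S = 2)
    {a : X} (ha : a ∈ S) : a ^ 2 = 1 := by
  have h := pow_card_eq_one' (G := S) (x := ⟨a, ha⟩)
  rw [hS] at h
  simpa [Subtype.ext_iff] using h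

lemma aux_card_sq_one (X : Type*) [Group X] [Finite X] :
    Nat.card {x : X // x ^ 2 = 1} = Nat.card {x : X // orderOf x = 2} + 1 := by
  classical
  haveI : Fact (Nat.Prime 2) := ⟨Nat.prime_two⟩
  have h : {x : X | x ^ 2 = 1} = {x : X | orderOf x = 2} ∪ {1} := by
    ext x
    simp only [Set.mem_setOf_eq, Set.mem_union, Set.mem_singleton_iff]
    constructor
    · intro hx
      rcases eq_or_ne x 1 with h1 | h1
      · exact Or.inr h1
      · exact Or.inl (orderOf_eq_prime hx h1)
    · rintro (hx | rfl)
      · rw [← hx]; exact pow_orderOf_eq_one x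
      · simp
  have hdisj : Disjoint {x : X | orderOf x = 2} ({1} : Set X) := by
    rw [Set.disjoint_singleton_right]
    simp
  calc Nat.card {x : X // x ^ 2 = 1} = ({x : X | x ^ 2 = 1} : Set X).ncard :=
        Nat.card_coe_set_eq _
    _ = ({x : X | orderOf x = 2} : Set X).ncard + ({1} : Set X).ncard := by
        rw [h, Set.ncard_union_eq hdisj (Set.toFinite _) (Set.toFinite _)]
    _ = Nat.card {x : X // orderOf x = 2} + 1 := by
        rw [Set.ncard_singleton, ← Nat.card_coe_set_eq]; rfl

lemma aux_orderTwo_unique {X : Type*} [Group X] [Fintype X] (hc : IsCyclic X)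
    (hd : 2 ∣ Fintype.card X) {a b : X} (ha : orderOf a = 2) (hb : orderOf b = 2) : a = b := by
  classical
  have h := IsCyclic.card_orderOf_eq_totient (α := X) (d := 2) hd
  have h1 : Nat.totient 2 = 1 := by decide
  rw [h1] at h
  exact Finset.card_le_one.mp h.le a (by simp [ha]) b (by simp [hb])

lemma aux_card_preimage {A B : Type*} [Group A] [Group B] (f : A →* B)
    (hf : Function.Surjective f) (T : Set B) :
    Nat.card (⇑f ⁻¹' T) = Nat.card f.ker * Nat.card T := by
  classical
  have hsec : ∀ b, f (Function.surjInv hf b) = b := Function.surjInv_eq hf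
  let e : (⇑f ⁻¹' T) ≃ f.ker × T :=
  { toFun := fun a => (⟨(Function.surjInv hf (f a))⁻¹ * a, by
      simp [MonoidHom.mem_ker, hsec]⟩, ⟨f a, a.2⟩)
    invFun := fun p => ⟨Function.surjInv hf p.2 * p.1, by
      have h1 : f (p.1 : A) = 1 := p.1.2
      simp [Set.mem_preimage, h1, hsec, p.2.2]⟩
    left_inv := fun a => by
      ext
      simp [mul_inv_cancel_left]
    right_inv := fun p => by
      have h1 : f (p.1 : A) = 1 := p.1.2
      ext
      · simp [h1, hsec]
      · simp [h1, hsec] }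
  rw [Nat.card_congr e, Nat.card_prod]

lemma aux_sq_mem_frattini {X : Type*} [Group X] [Finite X] (h : IsPGroup 2 X) (x : X) :
    x ^ 2 ∈ frattini X := by
  haveI : Fact (Nat.Prime 2) := ⟨Nat.prime_two⟩
  have hco : ∀ M : Subgroup X, IsCoatom M → M.Normal :=
    ((isNilpotent_of_finite_tfae (G := X)).out 0 2).mp h.isNilpotent
  have hfr : frattini X = ⨅ M ∈ {M : Subgroup X | IsCoatom M}, M := rfl
  rw [hfr]
  simp only [Subgroup.mem_iInf]
  intro M hM
  haveI := hco M hM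
  have hQ : IsPGroup 2 (X ⧸ M) := h.to_quotient M
  have hsub : ∀ S : Subgroup (X ⧸ M), S = ⊥ ∨ S = ⊤ := by
    intro S
    rcases eq_or_ne S ⊥ with hb | hb
    · exact Or.inl hb
    · right
      obtain ⟨⟨q, hqS⟩, hq1⟩ := Subgroup.ne_bot_iff_exists_ne_one.mp hb
      have hq1' : q ≠ 1 := by simpa using hq1
      obtain ⟨x₀, rfl⟩ := QuotientGroup.mk'_surjective M q
      have hle : M ≤ S.comap (QuotientGroup.mk' M) := by
        intro m hm
        have : QuotientGroup.mk' M m = 1 := (QuotientGroup.eq_one_iff m).mpr hm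
        simp only [Subgroup.mem_comap, this]
        exact S.one_mem
      have hlt : M < S.comap (QuotientGroup.mk' M) := by
        refine lt_of_le_of_ne hle fun hcontra => ?_
        have hx0 : x₀ ∈ S.comap (QuotientGroup.mk' M) := hqS
        rw [← hcontra] at hx0
        exact hq1' ((QuotientGroup.eq_one_iff x₀).mpr hx0)
      have htop : S.comap (QuotientGroup.mk' M) = ⊤ := hM.2 _ hlt
      have := Subgroup.map_comap_eq_self_of_surjective
        (f := QuotientGroup.mk' M) (QuotientGroup.mk'_surjective M) (H := S)
      rw [← this, htop]
      exact Subgroup.map_top_of_surjective _ (QuotientGroup.mk'_surjective M)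
  have hq2 : ∀ q : X ⧸ M, q ^ 2 = 1 := by
    intro q
    by_contra hq2
    have hzp : Subgroup.zpowers (q ^ 2) = ⊤ := by
      rcases hsub (Subgroup.zpowers (q ^ 2)) with hb | ht
      · exact absurd (by rw [← Subgroup.mem_bot, ← hb]; exact Subgroup.mem_zpowers _) hq2
      · exact ht
    obtain ⟨k, hk⟩ := hQ q
    obtain ⟨j, hj, hoj⟩ := (Nat.dvd_prime_pow Nat.prime_two).mp (orderOf_dvd_of_pow_eq_one hk)
    have hj2 : 2 ≤ j := by
      by_contra hjlt
      have : orderOf q ∣ 2 := by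
        rw [hoj]
        exact pow_dvd_pow 2 (by omega : j ≤ 1) |>.trans (by norm_num)
      exact hq2 (orderOf_dvd_iff_pow_eq_one.mp this)
    have hgcd : (orderOf q).gcd 2 = 2 :=
      Nat.gcd_eq_right (hoj ▸ dvd_pow_self 2 (by omega : j ≠ 0))
    have ho2 : orderOf (q ^ 2) = 2 ^ (j - 1) := by
      rw [orderOf_pow' q (two_ne_zero), hgcd, hoj]
      have hsplit : (2:ℕ) ^ j = 2 ^ (j - 1) * 2 := by
        rw [← pow_succ]; congr 1; omega
      rw [hsplit, Nat.mul_div_cancel _ two_pos]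
    have hcard : Nat.card (X ⧸ M) = 2 ^ (j - 1) := by
      rw [← ho2, ← Nat.card_zpowers, hzp, Subgroup.card_top]
    have hle : orderOf q ≤ Nat.card (X ⧸ M) := by
      rw [← Nat.card_zpowers]
      exact Subgroup.card_le_card_group _
    rw [hcard, hoj] at hle
    have : (2:ℕ) ^ (j - 1) < 2 ^ j := Nat.pow_lt_pow_right one_lt_two (by omega)
    omega
  have := hq2 (QuotientGroup.mk' M x)
  rw [← map_pow] at this
  exact (QuotientGroup.eq_one_iff _).mp this

/-- If `G` is an (almost) extraspecial 2-group of order `2^m` written as the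
central product `D₈ ∘ K` with `K` an (almost) extraspecial 2-group of order
`2^(m−2)` (`m ≥ 5`), then `n₂(G) = 2^(m−2) + 2·n₂(K) + 1`. -/
theorem numOfOrder_two_of_D8_central_product_step {m : ℕ} (hm : 5 ≤ m)
    (G : Type*) [Group G] [Fintype G]
    (hG : IsExtraspecial 2 G ∨ IsAlmostExtraspecial 2 G)
    (hcardG : Nat.card G = 2 ^ m)
    (H K : Subgroup G)
    (hD8 : Nonempty (H ≃* DihedralGroup 4))
    (hK : IsExtraspecial 2 K ∨ IsAlmostExtraspecial 2 K)
    (hcardK : Nat.card K = 2 ^ (m - 2))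
    (hcomm : ∀ x ∈ H, ∀ y ∈ K, Commute x y)
    (hgen : H ⊔ K = ⊤) :
    numOfOrder G 2 = 2 ^ (m - 2) + 2 * numOfOrder K 2 + 1 := by
  classical
  haveI : Fact (Nat.Prime 2) := ⟨Nat.prime_two⟩
  obtain ⟨φ⟩ := hD8
  have hcardH : Nat.card H = 8 := by
    rw [Nat.card_congr φ.toEquiv, Nat.card_eq_fintype_card, DihedralGroup.card]
  have hcm : ∀ (h : H) (k : K), Commute (h : G) (k : G) := fun h k => hcomm _ h.2 _ k.2
  -- the multiplication homomorphism
  let f : H × K →* G :=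
  { toFun := fun p => (p.1 : G) * (p.2 : G)
    map_one' := by simp
    map_mul' := by
      rintro ⟨h1, k1⟩ ⟨h2, k2⟩
      simp only [Prod.fst_mul, Prod.snd_mul, Subgroup.coe_mul]
      exact (hcm h2 k1).mul_mul_mul_comm _ _ }
  have hf_apply : ∀ p : H × K, f p = (p.1 : G) * (p.2 : G) := fun _ => rfl
  have hfsurj : Function.Surjective f := by
    rw [← MonoidHom.range_eq_top]
    rw [eq_top_iff, ← hgen, sup_le_iff]
    constructor
    · intro x hx
      exact ⟨(⟨x, hx⟩, 1), by simp [hf_apply]⟩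
    · intro x hx
      exact ⟨(1, ⟨x, hx⟩), by simp [hf_apply]⟩
  -- cardinality of the kernel
  have hcardHK : Nat.card (H × K) = 2 ^ (m + 1) := by
    rw [Nat.card_prod, hcardH, hcardK]
    have h8 : (8:ℕ) = 2 ^ 3 := rfl
    rw [h8, ← pow_add]
    congr 1
    omega
  have hker : Nat.card f.ker = 2 := by
    have h1 : Nat.card (H × K) = Nat.card ((H × K) ⧸ f.ker) * Nat.card f.ker :=
      Subgroup.card_eq_card_quotient_mul_card_subgroup f.ker
    rw [Nat.card_congr (QuotientGroup.quotientKerEquivOfSurjective f hfsurj).toEquiv,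
      hcardG, hcardHK] at h1
    have h2 : (2:ℕ) ^ m * 2 = 2 ^ m * Nat.card f.ker := by
      rw [← h1, pow_succ]
    exact (Nat.eq_of_mul_eq_mul_left (by positivity) h2).symm
  -- the intersection H ⊓ K has order 2
  have eHK : f.ker ≃ ↥(H ⊓ K) :=
  { toFun := fun p => ⟨((p : H × K).1 : G), ⟨(p : H × K).1.2, by
      have hp : ((p : H × K).1 : G) * ((p : H × K).2 : G) = 1 := p.2
      rw [eq_inv_of_mul_eq_one_left hp]
      exact K.inv_mem (p : H × K).2.2⟩⟩
    invFun := fun x => ⟨(⟨(x : G), x.2.1⟩, ⟨(x : G)⁻¹, K.inv_mem x.2.2⟩), by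
      simp [MonoidHom.mem_ker, hf_apply]⟩
    left_inv := fun p => by
      have hp : ((p : H × K).1 : G) * ((p : H × K).2 : G) = 1 := p.2
      apply Subtype.ext
      apply Prod.ext
      · rfl
      · apply Subtype.ext
        exact inv_eq_of_mul_eq_one_right hp
    right_inv := fun x => rfl }
  have hcardHK2 : Nat.card ↥(H ⊓ K) = 2 := (Nat.card_congr eHK).symm.trans hker
  -- the central element z
  haveI : Nontrivial ↥(H ⊓ K) := by
    rw [← Finite.one_lt_card_iff_nontrivial, hcardHK2]
    norm_num
  obtain ⟨w, hw1⟩ := exists_ne (1 : ↥(H ⊓ K))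
  have hwH : (w : G) ∈ H := w.2.1
  have hwK : (w : G) ∈ K := w.2.2
  have hwne : (w : G) ≠ 1 := fun h => hw1 (Subtype.ext h)
  -- w is central in H, so φ maps it to r 2
  set wH : H := ⟨(w : G), hwH⟩ with hwHdef
  have hcw : ∀ u : DihedralGroup 4, u * φ wH = φ wH * u := by
    intro u
    have h1 : (φ.symm u) * wH = wH * (φ.symm u) := by
      apply Subtype.ext
      exact (hcomm _ (φ.symm u).2 _ hwK).eq
    calc u * φ wH = φ (φ.symm u * wH) := by rw [map_mul, φ.apply_symm_apply]
      _ = φ (wH * φ.symm u) := by rw [h1]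
      _ = φ wH * u := by rw [map_mul, φ.apply_symm_apply]
  have hd8c : ∀ v : DihedralGroup 4, (∀ u : DihedralGroup 4, u * v = v * u) → v ≠ 1 →
      v = DihedralGroup.r 2 := by decide
  have hφw : φ wH = DihedralGroup.r 2 := by
    apply hd8c _ hcw
    intro hc
    have h1 : wH = 1 := φ.injective (by rw [hc, map_one])
    exact hwne (congrArg Subtype.val h1)
  set z : G := (w : G) with hzdef
  have hzH : z ∈ H := hwH
  have hzK : z ∈ K := hwK
  have hzne : z ≠ 1 := hwne
  have hz2 : z ^ 2 = 1 := aux_sq_one_of_card_two hcardHK2 (⟨hwH, hwK⟩ : (w:G) ∈ H ⊓ K)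
  -- squares in H
  have hD8sq : ∀ v : DihedralGroup 4, v ^ 2 = 1 ∨ v ^ 2 = DihedralGroup.r 2 := by decide
  have hHsq : ∀ h : H, (h : G) ^ 2 = 1 ∨ (h : G) ^ 2 = z := by
    intro h
    rcases hD8sq (φ h) with h1 | h1
    · left
      have h2 : h ^ 2 = 1 := φ.injective (by rw [map_pow, h1, map_one])
      calc (h : G) ^ 2 = ((h ^ 2 : H) : G) := by push_cast; rfl
        _ = 1 := by rw [h2]; rfl
    · right
      have h2 : h ^ 2 = wH := φ.injective (by rw [map_pow, h1, hφw])
      calc (h : G) ^ 2 = ((h ^ 2 : H) : G) := by push_cast; rfl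
        _ = z := by rw [h2]
  -- counts in H
  have hA1 : Nat.card {h : H // (h : G) ^ 2 = 1} = 6 := by
    have e : {h : H // (h : G) ^ 2 = 1} ≃ {v : DihedralGroup 4 // v ^ 2 = 1} :=
      φ.toEquiv.subtypeEquiv (fun h => by
        rw [show ((h : G) ^ 2 = 1) ↔ (h ^ 2 = 1) from by norm_cast]
        rw [show (φ.toEquiv h) ^ 2 = φ (h ^ 2) from by rw [map_pow]; rfl]
        exact (MulEquiv.map_eq_one_iff φ).symm)
    rw [Nat.card_congr e, Nat.card_eq_fintype_card]
    decide
  have hA2 : Nat.card {h : H // (h : G) ^ 2 = z} = 2 := by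
    have e : {h : H // (h : G) ^ 2 = z} ≃ {v : DihedralGroup 4 // v ^ 2 = DihedralGroup.r 2} :=
      φ.toEquiv.subtypeEquiv (fun h => by
        rw [show ((h : G) ^ 2 = z) ↔ (h ^ 2 = wH) from by
          rw [hzdef, ← Subtype.coe_inj]; push_cast; rfl]
        rw [show (φ.toEquiv h) ^ 2 = φ (h ^ 2) from by rw [map_pow]; rfl]
        rw [← hφw]
        exact ⟨fun hh => hh ▸ rfl, fun hh => φ.injective hh⟩)
    rw [Nat.card_congr e, Nat.card_eq_fintype_card]
    decide
  -- K data
  have hKp : IsPGroup 2 K := hK.elim And.left And.left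
  have hfrK : commutator ↥K = frattini ↥K := hK.elim (fun h => h.2.2.1) (fun h => h.2.1)
  have hccK : Nat.card (commutator ↥K) = 2 := hK.elim (fun h => h.2.2.2) (fun h => h.2.2.1)
  haveI : Nontrivial ↥(commutator ↥K) := by
    rw [← Finite.one_lt_card_iff_nontrivial, hccK]
    norm_num
  obtain ⟨t0, ht0⟩ := exists_ne (1 : ↥(commutator ↥K))
  set t : ↥K := (t0 : ↥K) with htdef
  have ht : t ∈ commutator ↥K := t0.2
  have htne : t ≠ 1 := fun h => ht0 (Subtype.ext h)
  have ht2 : t ^ 2 = 1 := aux_sq_one_of_card_two hccK ht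
  -- t is central in K
  have htc : t ∈ Subgroup.center ↥K := by
    rw [Subgroup.mem_center_iff]
    intro u
    have h1 : u * t * u⁻¹ ∈ commutator ↥K := (Subgroup.Normal.conj_mem inferInstance) t ht u
    have h2 : u * t * u⁻¹ ≠ 1 := by
      intro hc
      apply htne
      have := congrArg (fun x => u⁻¹ * x * u) hc
      simpa [mul_assoc] using this
    have h3 : u * t * u⁻¹ = t := aux_eq_of_card_two hccK h1 ht h2 htne
    have := congrArg (fun x => x * u) h3
    simpa [mul_assoc] using this
  -- z (as element of K) is central in K
  set zK : ↥K := ⟨z, hzK⟩ with hzKdef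
  have hzKne : zK ≠ 1 := fun h => hzne (congrArg Subtype.val h)
  have hzK2 : zK ^ 2 = 1 := by
    apply Subtype.ext
    push_cast
    exact hz2
  have hzKc : zK ∈ Subgroup.center ↥K := by
    rw [Subgroup.mem_center_iff]
    intro u
    apply Subtype.ext
    push_cast
    exact (hcomm z hzH _ u.2).eq.symm
  -- the center of K is cyclic of even order
  have hcyc : IsCyclic ↥(Subgroup.center ↥K) := by
    rcases hK with hE | hA
    · have hcc : Nat.card ↥(Subgroup.center ↥K) = 2 := by rw [← hE.2.1]; exact hccK
      exact isCyclic_of_prime_card hcc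
    · exact hA.2.2.2.1
  have hdvd : 2 ∣ Nat.card ↥(Subgroup.center ↥K) := by
    rcases hK with hE | hA
    · rw [← hE.2.1, hccK]
    · rw [hA.2.2.2.2]
      norm_num
  -- t = zK
  haveI : Fintype ↥(Subgroup.center ↥K) := Fintype.ofFinite _
  have htzK : t = zK := by
    have h1 : orderOf t = 2 := orderOf_eq_prime ht2 htne
    have h2 : orderOf zK = 2 := orderOf_eq_prime hzK2 hzKne
    have e1 : orderOf (⟨t, htc⟩ : ↥(Subgroup.center ↥K)) = 2 := by
      rw [← orderOf_injective (Subgroup.center ↥K).subtype (Subgroup.subtype_injective _) ⟨t, htc⟩]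
      exact h1
    have e2 : orderOf (⟨zK, hzKc⟩ : ↥(Subgroup.center ↥K)) = 2 := by
      rw [← orderOf_injective (Subgroup.center ↥K).subtype (Subgroup.subtype_injective _)
        ⟨zK, hzKc⟩]
      exact h2
    have := aux_orderTwo_unique hcyc (by rw [← Nat.card_eq_fintype_card]; exact hdvd) e1 e2
    exact Subtype.ext_iff.mp this
  -- squares in K
  have hKsq : ∀ k : ↥K, (k : G) ^ 2 = 1 ∨ (k : G) ^ 2 = z := by
    intro k
    have hmem : k ^ 2 ∈ commutator ↥K := by
      rw [hfrK]
      exact aux_sq_mem_frattini hKp k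
    rcases eq_or_ne (k ^ 2) 1 with h1 | h1
    · left
      calc (k : G) ^ 2 = ((k ^ 2 : K) : G) := by push_cast; rfl
        _ = 1 := by rw [h1]; rfl
    · right
      have h2 : k ^ 2 = t := aux_eq_of_card_two hccK hmem ht h1 htne
      rw [htzK] at h2
      calc (k : G) ^ 2 = ((k ^ 2 : K) : G) := by push_cast; rfl
        _ = z := by rw [h2]
  -- counts in K
  set a : ℕ := Nat.card {k : ↥K // (k : G) ^ 2 = 1} with hadef
  set b : ℕ := Nat.card {k : ↥K // (k : G) ^ 2 = z} with hbdef
  have hab : a + b = 2 ^ (m - 2) := by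
    have e1 : ↥K ≃ {k : ↥K // (k : G) ^ 2 = 1} ⊕ {k : ↥K // ¬ (k : G) ^ 2 = 1} :=
      (Equiv.sumCompl _).symm
    have e2 : {k : ↥K // ¬ (k : G) ^ 2 = 1} ≃ {k : ↥K // (k : G) ^ 2 = z} :=
      Equiv.subtypeEquivRight (fun k => by
        constructor
        · intro hk
          rcases hKsq k with h | h
          · exact absurd h hk
          · exact h
        · intro hk hc
          exact hzne (hk.symm.trans hc))
    rw [← hcardK, Nat.card_congr e1, Nat.card_sum, Nat.card_congr e2]
  have haK : a = numOfOrder K 2 + 1 := by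
    have e : {k : ↥K // (k : G) ^ 2 = 1} ≃ {k : ↥K // k ^ 2 = 1} :=
      Equiv.subtypeEquivRight (fun k => by norm_cast)
    rw [hadef, Nat.card_congr e, aux_card_sq_one]
    rfl
  -- the main count
  set T : Set G := {g : G | g ^ 2 = 1} with hTdef
  have hcardT : Nat.card ↥T = numOfOrder G 2 + 1 := aux_card_sq_one G
  have hP1 : Nat.card ↥(⇑f ⁻¹' T) = 2 * (numOfOrder G 2 + 1) := by
    rw [aux_card_preimage f hfsurj T, hker, hcardT]
  have hPeq : ⇑f ⁻¹' T =
      {p : H × K | (p.1 : G) ^ 2 = 1 ∧ (p.2 : G) ^ 2 = 1} ∪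
      {p : H × K | (p.1 : G) ^ 2 = z ∧ (p.2 : G) ^ 2 = z} := by
    ext p
    simp only [Set.mem_preimage, Set.mem_union, Set.mem_setOf_eq, hTdef, hf_apply]
    rw [(hcm p.1 p.2).mul_pow]
    constructor
    · intro hp
      rcases hHsq p.1 with h1 | h1 <;> rcases hKsq p.2 with h2 | h2
      · exact Or.inl ⟨h1, h2⟩
      · rw [h1, h2, one_mul] at hp
        exact absurd hp hzne
      · rw [h1, h2, mul_one] at hp
        exact absurd hp hzne
      · exact Or.inr ⟨h1, h2⟩
    · rintro (⟨h1, h2⟩ | ⟨h1, h2⟩) <;> rw [h1, h2]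
      · rw [one_mul]
      · rw [← sq]
        exact hz2
  have hdisjP : Disjoint
      ({p : H × K | (p.1 : G) ^ 2 = 1 ∧ (p.2 : G) ^ 2 = 1})
      ({p : H × K | (p.1 : G) ^ 2 = z ∧ (p.2 : G) ^ 2 = z}) := by
    rw [Set.disjoint_left]
    rintro p ⟨h1, -⟩ ⟨h2, -⟩
    exact hzne (h1 ▸ h2).symm
  have hS1 : Nat.card ↥({p : H × K | (p.1 : G) ^ 2 = 1 ∧ (p.2 : G) ^ 2 = 1}) = 6 * a := by
    have e : {p : H × K // (p.1 : G) ^ 2 = 1 ∧ (p.2 : G) ^ 2 = 1} ≃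
        {h : H // (h : G) ^ 2 = 1} × {k : ↥K // (k : G) ^ 2 = 1} :=
      Equiv.subtypeProdEquivProd (p := fun h : H => (h : G) ^ 2 = 1)
        (q := fun k : ↥K => (k : G) ^ 2 = 1)
    have hc1 : Nat.card ↥({p : H × K | (p.1 : G) ^ 2 = 1 ∧ (p.2 : G) ^ 2 = 1}) =
        Nat.card ({h : H // (h : G) ^ 2 = 1} × {k : ↥K // (k : G) ^ 2 = 1}) := Nat.card_congr e
    rw [hc1, Nat.card_prod, hA1, hadef]
  have hS2 : Nat.card ↥({p : H × K | (p.1 : G) ^ 2 = z ∧ (p.2 : G) ^ 2 = z}) = 2 * b := by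
    have e : {p : H × K // (p.1 : G) ^ 2 = z ∧ (p.2 : G) ^ 2 = z} ≃
        {h : H // (h : G) ^ 2 = z} × {k : ↥K // (k : G) ^ 2 = z} :=
      Equiv.subtypeProdEquivProd (p := fun h : H => (h : G) ^ 2 = z)
        (q := fun k : ↥K => (k : G) ^ 2 = z)
    have hc2 : Nat.card ↥({p : H × K | (p.1 : G) ^ 2 = z ∧ (p.2 : G) ^ 2 = z}) =
        Nat.card ({h : H // (h : G) ^ 2 = z} × {k : ↥K // (k : G) ^ 2 = z}) := Nat.card_congr e
    rw [hc2, Nat.card_prod, hA2, hbdef]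
  have hP2 : Nat.card ↥(⇑f ⁻¹' T) = 6 * a + 2 * b := by
    rw [hPeq, Nat.card_coe_set_eq,
      Set.ncard_union_eq hdisjP (Set.toFinite _) (Set.toFinite _),
      ← Nat.card_coe_set_eq, ← Nat.card_coe_set_eq, hS1, hS2]
  have hfinal : 2 * (numOfOrder G 2 + 1) = 6 * a + 2 * b := by rw [← hP1, hP2]
  omega
end

section
/- Let p be an odd prime and G a finite p-group with G' = Φ(G), |G'| = p, and G' ≤ Z(G) (i.e., G is generalized extraspecial), such that exp(G) = p². Then the number of elements of G of order p is |G|/p − 1, and the number of elements of order p² is |G| − |G|/p. -/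
open Subgroup
open scoped commutatorElement

private lemma aux_pow_mul {G : Type*} [Group G] (a b c : G)
    (hc : ∀ g : G, c * g = g * c) (h : b * a = a * b * c) :
    ∀ n : ℕ, b ^ n * a = a * b ^ n * c ^ n := by
  intro n
  induction n with
  | zero => simp
  | succ n ih =>
    have hcb : Commute c b := hc b
    calc b ^ (n + 1) * a = b ^ n * (b * a) := by rw [pow_succ]; simp [mul_assoc]
      _ = b ^ n * (a * b * c) := by rw [h]
      _ = (b ^ n * a) * b * c := by simp [mul_assoc]
      _ = (a * b ^ n * c ^ n) * b * c := by rw [ih]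
      _ = a * b ^ n * (c ^ n * b) * c := by simp [mul_assoc]
      _ = a * b ^ n * (b * c ^ n) * c := by rw [(hcb.pow_left n).eq]
      _ = a * (b ^ n * b) * (c ^ n * c) := by simp [mul_assoc]
      _ = a * b ^ (n + 1) * c ^ (n + 1) := by rw [pow_succ, pow_succ]

private lemma aux_mul_pow {G : Type*} [Group G] (a b c : G)
    (hc : ∀ g : G, c * g = g * c) (h : b * a = a * b * c) :
    ∀ n : ℕ, (a * b) ^ n = a ^ n * b ^ n * c ^ n.choose 2 := by
  intro n
  induction n with
  | zero => simp
  | succ n ih =>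
    have hb : b ^ n * a = a * b ^ n * c ^ n := aux_pow_mul a b c hc h n
    have hcg : ∀ (m : ℕ) (g : G), c ^ m * g = g * c ^ m := fun m g =>
      ((show Commute c g from hc g).pow_left m).eq
    calc (a * b) ^ (n + 1) = (a * b) ^ n * (a * b) := pow_succ _ _
      _ = (a ^ n * b ^ n * c ^ n.choose 2) * (a * b) := by rw [ih]
      _ = a ^ n * b ^ n * (c ^ n.choose 2 * a) * b := by simp [mul_assoc]
      _ = a ^ n * b ^ n * (a * c ^ n.choose 2) * b := by rw [hcg _ a]
      _ = a ^ n * (b ^ n * a) * (c ^ n.choose 2 * b) := by simp [mul_assoc]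
      _ = a ^ n * (a * b ^ n * c ^ n) * (b * c ^ n.choose 2) := by
          rw [hb, hcg _ b]
      _ = (a ^ n * a) * (b ^ n * (c ^ n * b)) * c ^ n.choose 2 := by simp [mul_assoc]
      _ = (a ^ n * a) * (b ^ n * (b * c ^ n)) * c ^ n.choose 2 := by rw [hcg n b]
      _ = a ^ (n + 1) * b ^ (n + 1) * (c ^ n * c ^ n.choose 2) := by
          rw [pow_succ, pow_succ]; simp [mul_assoc]
      _ = a ^ (n + 1) * b ^ (n + 1) * c ^ (n + 1).choose 2 := by
          rw [← pow_add]
          congr 1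
          rw [Nat.choose_succ_succ, Nat.choose_one_right]

/-- In a finite `p`-group, every `p`-th power lies in the Frattini subgroup. -/
private lemma pow_mem_frattini {p : ℕ} (hp : p.Prime) {G : Type*} [Group G] [Fintype G]
    (hpG : IsPGroup p G) (x : G) : x ^ p ∈ frattini G := by
  haveI : Fact p.Prime := ⟨hp⟩
  haveI : Group.IsNilpotent G := hpG.isNilpotent
  rw [frattini, Order.radical]
  refine Subgroup.mem_iInf.2 fun K => Subgroup.mem_iInf.2 fun hK => ?_
  haveI : K.Normal := Subgroup.NormalizerCondition.normal_of_coatom K normalizerCondition_of_isNilpotent hK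
  -- The quotient is a nontrivial p-group
  have hQ : IsPGroup p (G ⧸ K) := hpG.to_quotient K
  have hKne : K ≠ ⊤ := hK.1
  obtain ⟨y, hy⟩ : ∃ y : G, y ∉ K := by
    by_contra hcon
    push_neg at hcon
    exact hKne ((Subgroup.eq_top_iff' K).2 hcon)
  haveI : Nontrivial (G ⧸ K) :=
    ⟨⟨(y : G ⧸ K), 1, by simpa [QuotientGroup.eq_one_iff] using hy⟩⟩
  -- It has an element of order p
  obtain ⟨n, hn0, hcard⟩ := hQ.nontrivial_iff_card.1 inferInstance
  have hdvd : p ∣ Nat.card (G ⧸ K) := by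
    rw [hcard]; exact dvd_pow_self p hn0.ne'
  obtain ⟨g, hg⟩ := exists_prime_orderOf_dvd_card' (G := G ⧸ K) p hdvd
  -- The preimage of ⟨g⟩ strictly contains K, hence is ⊤, hence ⟨g⟩ = ⊤
  have hgne : g ≠ 1 := by
    intro hg1
    rw [hg1, orderOf_one] at hg
    exact hp.one_lt.ne' hg.symm
  set L := (Subgroup.zpowers g).comap (QuotientGroup.mk' K) with hL
  have hKL : K ≤ L := by
    intro k hk
    simp only [hL, Subgroup.mem_comap]
    have : (QuotientGroup.mk' K) k = 1 := (QuotientGroup.eq_one_iff k).2 hk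
    rw [this]
    exact Subgroup.one_mem _
  have hKneL : K ≠ L := by
    intro hKLe
    obtain ⟨z, rfl⟩ := QuotientGroup.mk'_surjective K g
    have hz : z ∈ L := by
      simp only [hL, Subgroup.mem_comap]
      exact Subgroup.mem_zpowers _
    rw [← hKLe] at hz
    exact hgne ((QuotientGroup.eq_one_iff z).2 hz)
  have hLtop : L = ⊤ := hK.2 L (lt_of_le_of_ne hKL hKneL)
  have hztop : Subgroup.zpowers g = ⊤ := by
    have := Subgroup.comap_injective (f := QuotientGroup.mk' K)
      (QuotientGroup.mk'_surjective K)
    apply this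
    rw [← hL, hLtop, Subgroup.comap_top]
  -- So the quotient has order p, hence x^p maps to 1
  have hcardQ : Nat.card (G ⧸ K) = p := by
    rw [← hg, ← Nat.card_zpowers, hztop]
    exact (Nat.card_congr Subgroup.topEquiv.toEquiv).symm
  have : ((x : G ⧸ K)) ^ p = 1 := by
    rw [← hcardQ]
    exact pow_card_eq_one'
  rwa [← QuotientGroup.mk_pow, QuotientGroup.eq_one_iff] at this

/-- Let `p` be an odd prime and `G` a finite generalized extraspecial `p`-group
(`G' = Φ(G)`, `|G'| = p`, `G' ≤ Z(G)`) of exponent `p²`. Then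
`n_p(G) = |G|/p − 1` and `n_{p²}(G) = |G| − |G|/p`. -/
theorem card_orders_of_generalized_extraspecial {p : ℕ} (hp : p.Prime) (hodd : Odd p)
    (G : Type*) [Group G] [Fintype G]
    (hpG : IsPGroup p G)
    (hcf : commutator G = frattini G)
    (hcardc : Nat.card (commutator G) = p)
    (hcz : commutator G ≤ Subgroup.center G)
    (hexp : Monoid.exponent G = p ^ 2) :
    numOfOrder G p = Nat.card G / p - 1 ∧
      numOfOrder G (p ^ 2) = Nat.card G - Nat.card G / p := by
  classical
  haveI : Fact p.Prime := ⟨hp⟩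
  -- The p-th power map is a homomorphism
  have hphipre : ∀ a b : G, (a * b) ^ p = a ^ p * b ^ p := by
    intro a b
    set c : G := ⁅b⁻¹, a⁻¹⁆ with hcdef
    have hcmem : c ∈ commutator G := by
      rw [_root_.commutator_def]
      exact Subgroup.commutator_mem_commutator (Subgroup.mem_top _) (Subgroup.mem_top _)
    have hccen : ∀ g : G, c * g = g * c := fun g =>
      ((Subgroup.mem_center_iff.1 (hcz hcmem)) g).symm
    have hba : b * a = a * b * c := by
      rw [hcdef, commutatorElement_def]
      group
    have hcp : c ^ p = 1 := by
      have : (⟨c, hcmem⟩ : commutator G) ^ p = 1 := by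
        rw [← hcardc]
        exact pow_card_eq_one'
      have := congrArg (Subtype.val) this
      simpa using this
    have hchoose : c ^ p.choose 2 = 1 := by
      have h2 : 2 ∣ p - 1 := by
        obtain ⟨k, hk⟩ := hodd
        omega
      obtain ⟨m, hm⟩ := h2
      have h2m : p * (2 * m) = 2 * (p * m) := by ring
      have : p.choose 2 = p * m := by
        rw [Nat.choose_two_right, hm, h2m, Nat.mul_div_cancel_left _ (by norm_num)]
      rw [this, pow_mul, hcp, one_pow]
    rw [aux_mul_pow a b c hccen hba p, hchoose, mul_one]
  let φ : G →* G :=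
    { toFun := fun x => x ^ p
      map_one' := one_pow p
      map_mul' := hphipre }
  -- The range of φ is contained in the commutator subgroup and has order p
  have hrange : φ.range ≤ commutator G := by
    rintro - ⟨x, rfl⟩
    rw [hcf]
    exact pow_mem_frattini hp hpG x
  have hrdvd : Nat.card φ.range ∣ p := by
    rw [← hcardc]
    exact Subgroup.card_dvd_of_le hrange
  obtain ⟨x₀, hx₀⟩ : ∃ x : G, x ^ p ≠ 1 := by
    by_contra hcon
    push_neg at hcon
    have := Monoid.exponent_dvd_of_forall_pow_eq_one hcon
    rw [hexp] at this
    have hle := Nat.le_of_dvd hp.pos this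
    nlinarith [hp.two_le]
  have hrbot : φ.range ≠ ⊥ := by
    intro hb
    apply hx₀
    have : φ x₀ ∈ φ.range := ⟨x₀, rfl⟩
    rw [hb, Subgroup.mem_bot] at this
    exact this
  have hrcard : Nat.card φ.range = p := by
    rcases (Nat.Prime.eq_one_or_self_of_dvd hp _ hrdvd) with h1 | h
    · exact absurd (Subgroup.card_eq_one.1 h1) hrbot
    · exact h
  -- Hence the kernel has cardinality |G|/p
  have hGcard : Nat.card G = p * Nat.card φ.ker := by
    rw [Subgroup.card_eq_card_quotient_mul_card_subgroup φ.ker]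
    congr 1
    rw [← hrcard]
    exact Nat.card_congr (QuotientGroup.quotientKerEquivRange φ).toEquiv
  have hkercard : Nat.card φ.ker = Nat.card G / p := by
    rw [hGcard, Nat.mul_div_cancel_left _ hp.pos]
  -- Counting
  have hSker : (Finset.univ.filter fun x : G => x ^ p = 1).card = Nat.card G / p := by
    rw [← hkercard, Nat.card_eq_fintype_card, Fintype.card_subtype]
    congr 1
    ext x
    simp [MonoidHom.mem_ker, φ]
  -- number of elements of order p
  have hnp : numOfOrder G p = Nat.card G / p - 1 := by
    have hfilt : (Finset.univ.filter fun x : G => x ^ p = 1)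
        = (Finset.univ.filter fun x : G => orderOf x = p)
          ∪ (Finset.univ.filter fun x : G => x = 1) := by
      rw [← Finset.filter_or]
      apply Finset.filter_congr
      intro x _
      rw [← orderOf_dvd_iff_pow_eq_one, Nat.dvd_prime hp]
      constructor
      · rintro (h1 | h2)
        · exact Or.inr (orderOf_eq_one_iff.1 h1)
        · exact Or.inl h2
      · rintro (h2 | h1)
        · exact Or.inr h2
        · exact Or.inl (by rw [h1, orderOf_one])
    have hdisj : Disjoint (Finset.univ.filter fun x : G => orderOf x = p)
        (Finset.univ.filter fun x : G => x = 1) := by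
      rw [Finset.disjoint_left]
      intro x hx hx'
      obtain ⟨-, h1⟩ := Finset.mem_filter.1 hx
      obtain ⟨-, h2⟩ := Finset.mem_filter.1 hx'
      rw [h2, orderOf_one] at h1
      exact hp.one_lt.ne' h1.symm
    have hone : (Finset.univ.filter fun x : G => x = 1).card = 1 := by
      have he : (Finset.univ.filter fun x : G => x = 1) = {1} := by
        ext x; simp
      rw [he, Finset.card_singleton]
    have hcount : (Finset.univ.filter fun x : G => orderOf x = p).card + 1
        = Nat.card G / p := by
      rw [← hone, ← Finset.card_union_of_disjoint hdisj, ← hfilt, hSker]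
    have hnum : numOfOrder G p = (Finset.univ.filter fun x : G => orderOf x = p).card := by
      rw [numOfOrder, Nat.card_eq_fintype_card, Fintype.card_subtype]
    omega
  refine ⟨hnp, ?_⟩
  -- number of elements of order p^2
  have hiff : ∀ x : G, orderOf x = p ^ 2 ↔ ¬ x ^ p = 1 := by
    intro x
    constructor
    · intro ho hx1
      have : orderOf x ∣ p := orderOf_dvd_of_pow_eq_one hx1
      rw [ho] at this
      have := Nat.le_of_dvd hp.pos this
      nlinarith [hp.two_le]
    · intro hx1
      have hdvd : orderOf x ∣ p ^ 2 := by
        rw [← hexp]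
        exact Monoid.order_dvd_exponent x
      obtain ⟨k, hk2, hko⟩ := (Nat.dvd_prime_pow hp).1 hdvd
      interval_cases k
      · rw [pow_zero, orderOf_eq_one_iff] at hko
        exact absurd (by rw [hko, one_pow]) hx1
      · rw [pow_one] at hko
        exact absurd (by rw [← hko]; exact pow_orderOf_eq_one x) hx1
      · exact hko
  have hfilt2 : (Finset.univ.filter fun x : G => orderOf x = p ^ 2)
      = Finset.univ \ (Finset.univ.filter fun x : G => x ^ p = 1) := by
    ext x
    simp [hiff x]
  have : numOfOrder G (p ^ 2)
      = (Finset.univ.filter fun x : G => orderOf x = p ^ 2).card := by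
    rw [numOfOrder, Nat.card_eq_fintype_card, Fintype.card_subtype]
  rw [this, hfilt2, Finset.card_sdiff_of_subset (Finset.filter_subset _ _), hSker,
    Finset.card_univ, Nat.card_eq_fintype_card]
end

section
/- Let p be an odd prime and G ≅ M_{p³}^{∘n} the central product of n copies of the modular group of order p³. Then n_p(G) = p^{2n} − 1, n_{p²}(G) = (p−1)p^{2n}, and ψ(G) = (p−1)p^{2n+2} + p(p^{2n} − 1) + 1. -/
/-- `K` is (isomorphic to) the modular group `M_{p³}`: the unique nonabelian
group of order `p³` and exponent `p²` (`p` odd). -/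
def IsModularPCubed (p : ℕ) (K : Type*) [Group K] : Prop :=
  Nat.card K = p ^ 3 ∧ Monoid.exponent K = p ^ 2 ∧ ¬ ∀ x y : K, Commute x y


open Subgroup
open scoped commutatorElement

section Aux
variable {G : Type*} [Group G]

lemma pow_aux (g h c : G) (hgh : h * g = g * (h * c)) (hcg : Commute c g) (hch : Commute c h) :
    ∀ m : ℕ, (g * h) ^ m = g ^ m * (h ^ m * c ^ (m.choose 2)) := by
  have key : ∀ m : ℕ, h ^ m * g = g * (h ^ m * c ^ m) := by
    intro m
    induction m with
    | zero => simp
    | succ m ih =>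
      calc h ^ (m+1) * g = h * (h ^ m * g) := by rw [pow_succ', mul_assoc]
        _ = h * (g * (h ^ m * c ^ m)) := by rw [ih]
        _ = (h * g) * (h ^ m * c ^ m) := by rw [mul_assoc]
        _ = g * ((h * c) * (h ^ m * c ^ m)) := by rw [hgh, mul_assoc]
        _ = g * (h * (c * (h ^ m * c ^ m))) := by rw [mul_assoc]
        _ = g * (h * (h ^ m * (c * c ^ m))) := by rw [(hch.pow_right m).left_comm]
        _ = g * (h ^ (m+1) * c ^ (m+1)) := by rw [pow_succ', pow_succ' c, mul_assoc]
  intro m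
  induction m with
  | zero => simp
  | succ m ih =>
    have hc2 : (m+1).choose 2 = m.choose 2 + m := by
      rw [Nat.choose_succ_succ, Nat.choose_one_right, add_comm]
    have hcgK : Commute (c ^ m.choose 2) g := hcg.pow_left _
    have hchK : Commute (c ^ m.choose 2) h := hch.pow_left _
    calc (g * h) ^ (m+1) = (g ^ m * (h ^ m * c ^ m.choose 2)) * (g * h) := by
          rw [pow_succ, ih]
      _ = g ^ m * (h ^ m * (c ^ m.choose 2 * (g * h))) := by rw [mul_assoc, mul_assoc]
      _ = g ^ m * (h ^ m * (g * (c ^ m.choose 2 * h))) := by rw [hcgK.left_comm]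
      _ = g ^ m * (h ^ m * (g * (h * c ^ m.choose 2))) := by rw [hchK.eq]
      _ = g ^ m * ((h ^ m * g) * (h * c ^ m.choose 2)) := by rw [mul_assoc]
      _ = g ^ m * ((g * (h ^ m * c ^ m)) * (h * c ^ m.choose 2)) := by rw [key m]
      _ = g ^ (m+1) * ((h ^ m * c ^ m) * (h * c ^ m.choose 2)) := by
          rw [pow_succ]; group
      _ = g ^ (m+1) * (h ^ m * ((c ^ m * h) * c ^ m.choose 2)) := by rw [mul_assoc, mul_assoc]
      _ = g ^ (m+1) * (h ^ m * ((h * c ^ m) * c ^ m.choose 2)) := by rw [(hch.pow_left m).eq]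
      _ = g ^ (m+1) * (h ^ (m+1) * c ^ (m.choose 2 + m)) := by
          rw [pow_succ h, pow_add, add_comm (m.choose 2) m, pow_add c m]; group
      _ = g ^ (m+1) * (h ^ (m+1) * c ^ ((m+1).choose 2)) := by rw [hc2]

lemma pow_choose_two_eq_one {p : ℕ} (hodd : Odd p) {c : G} (hc : c ^ p = 1) :
    c ^ (p.choose 2) = 1 := by
  obtain ⟨k, hk⟩ := hodd
  have h2 : p.choose 2 = p * k := by
    rw [Nat.choose_two_right, hk]
    have h1 : 2 * k + 1 - 1 = 2 * k := by omega
    rw [h1, show (2*k+1) * (2*k) = (2*k+1) * k * 2 by ring, Nat.mul_div_cancel _ (by omega)]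
  rw [h2, pow_mul, hc, one_pow]

end Aux

section Cube
variable {p : ℕ} (hp : p.Prime) {K : Type*} [Group K] [Finite K]
  (hc : Nat.card K = p ^ 3) (hna : ¬ ∀ x y : K, Commute x y)

include hp hc hna

lemma cube_center_card : Nat.card (Subgroup.center K) = p := by
  haveI := Fact.mk hp
  have hnt : Nontrivial K := by
    rw [← Finite.one_lt_card_iff_nontrivial, hc]
    exact Nat.one_lt_pow (by norm_num) hp.one_lt
  have hpg : IsPGroup p K := IsPGroup.of_card hc
  have hZnt : Nontrivial (center K) := hpg.center_nontrivial
  have hdvd : Nat.card (center K) ∣ p ^ 3 := by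
    rw [← hc, ← Subgroup.card_top (G := K)]
    exact card_dvd_of_le le_top
  obtain ⟨k, hk, hzk⟩ := (Nat.dvd_prime_pow hp).mp hdvd
  interval_cases k
  · rw [pow_zero] at hzk
    exact absurd hzk (Finite.one_lt_card_iff_nontrivial.mpr hZnt).ne'
  · rw [pow_one] at hzk; exact hzk
  · exfalso
    have heq := Subgroup.card_eq_card_quotient_mul_card_subgroup (center K)
    rw [hc, hzk] at heq
    have hq : Nat.card (K ⧸ center K) = p := by
      have h2 : p * p ^ 2 = Nat.card (K ⧸ center K) * p ^ 2 := by rw [← heq]; ring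
      exact (Nat.eq_of_mul_eq_mul_right (pow_pos hp.pos 2) h2).symm
    haveI : IsCyclic (K ⧸ center K) := isCyclic_of_prime_card hq
    exact hna fun x y =>
      commutative_of_cyclic_center_quotient (QuotientGroup.mk' (center K)) (by simp) x y
  · exfalso
    have htop : center K = ⊤ := (Subgroup.card_eq_iff_eq_top _).mp (by rw [hzk, hc])
    exact hna fun x y => Subgroup.mem_center_iff.mp (htop ▸ Subgroup.mem_top y) x

lemma cube_quotient_card : Nat.card (K ⧸ center K) = p ^ 2 := by
  have hz := cube_center_card hp hc hna
  have heq := Subgroup.card_eq_card_quotient_mul_card_subgroup (center K)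
  rw [hc, hz] at heq
  have h2 : p ^ 2 * p = Nat.card (K ⧸ center K) * p := by rw [← heq]; ring
  exact Nat.eq_of_mul_eq_mul_right hp.pos h2.symm

lemma cube_commutator_mem_center (g h : K) : ⁅g, h⁆ ∈ center K := by
  haveI := Fact.mk hp
  have hq := cube_quotient_card hp hc hna
  have hcomm := IsPGroup.commutative_of_card_eq_prime_sq hq
  rw [← QuotientGroup.eq_one_iff]
  have hmk : ((⁅g, h⁆ : K) : K ⧸ center K) = ⁅(g : K ⧸ center K), (h : K ⧸ center K)⁆ := rfl
  rw [hmk]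
  exact commutatorElement_eq_one_iff_commute.mpr (hcomm _ _)

lemma cube_pow_mem_center (g : K) : g ^ p ∈ center K := by
  have hq := cube_quotient_card hp hc hna
  have hnc : ¬ IsCyclic (K ⧸ center K) := by
    intro hcy
    exact hna fun x y =>
      commutative_of_cyclic_center_quotient (QuotientGroup.mk' (center K)) (by simp) x y
  set q : K ⧸ center K := (g : K ⧸ center K) with hqdef
  have hdvd : orderOf q ∣ p ^ 2 := hq ▸ orderOf_dvd_natCard q
  obtain ⟨k, hk, hok⟩ := (Nat.dvd_prime_pow hp).mp hdvd
  have hk1 : k ≤ 1 := by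
    by_contra hk2
    have hk2 : k = 2 := by omega
    apply hnc
    have htop : Subgroup.zpowers q = ⊤ := by
      apply (Subgroup.card_eq_iff_eq_top _).mp
      rw [Nat.card_zpowers, hok, hk2, hq]
    refine ⟨⟨q, fun x => ?_⟩⟩
    have hx : x ∈ Subgroup.zpowers q := by rw [htop]; exact Subgroup.mem_top x
    exact hx
  have hdp : orderOf q ∣ p := hok ▸ dvd_trans (pow_dvd_pow p hk1) (by rw [pow_one])
  have hq1 : q ^ p = 1 := orderOf_dvd_iff_pow_eq_one.mp hdp
  rw [← QuotientGroup.eq_one_iff]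
  exact hq1

end Cube

lemma card_sup_mul_card_inf {G : Type*} [Group G] [Finite G] (A B : Subgroup G)
    (hAB : ∀ a ∈ A, ∀ b ∈ B, Commute a b) :
    Nat.card (A ⊔ B : Subgroup G) * Nat.card (A ⊓ B : Subgroup G) =
      Nat.card A * Nat.card B := by
  have comm : ∀ (a : A) (b : B), Commute (A.subtype a) (B.subtype b) :=
    fun a b => hAB a a.2 b b.2
  let f : A × B →* G := (A.subtype).noncommCoprod (B.subtype) comm
  have hf : ∀ ab : A × B, f ab = (ab.1 : G) * (ab.2 : G) := fun _ => rfl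
  have hrange : f.range = A ⊔ B := by
    apply le_antisymm
    · rintro x ⟨⟨a, b⟩, rfl⟩
      exact mul_mem (le_sup_left (a := A) (b := B) a.2) (le_sup_right (a := A) (b := B) b.2)
    · rw [sup_le_iff]
      constructor
      · intro a ha; exact ⟨(⟨a, ha⟩, 1), by simp [hf]⟩
      · intro b hb; exact ⟨(1, ⟨b, hb⟩), by simp [hf]⟩
  have hker : Nat.card f.ker = Nat.card (A ⊓ B : Subgroup G) := by
    apply Nat.card_congr
    have toAB : ∀ x : f.ker, ((x : A × B).1 : G) ∈ A ⊓ B := by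
      intro x
      have hx : ((x : A × B).1 : G) * ((x : A × B).2 : G) = 1 := x.2
      refine Subgroup.mem_inf.mpr ⟨(x : A × B).1.2, ?_⟩
      have h2 : ((x : A × B).1 : G) = ((x : A × B).2 : G)⁻¹ := eq_inv_of_mul_eq_one_left hx
      rw [h2]; exact inv_mem (x : A × B).2.2
    have toK : ∀ y : (A ⊓ B : Subgroup G),
        ((⟨(y : G), (Subgroup.mem_inf.mp y.2).1⟩, ⟨(y : G)⁻¹,
          inv_mem (Subgroup.mem_inf.mp y.2).2⟩) : A × B) ∈ f.ker := by
      intro y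
      show ((y : G)) * ((y : G)⁻¹) = 1
      simp
    refine ⟨fun x => ⟨(x : A × B).1, toAB x⟩, fun y => ⟨_, toK y⟩, fun x => ?_, fun y => rfl⟩
    · have hx : ((x : A × B).1 : G) * ((x : A × B).2 : G) = 1 := x.2
      apply Subtype.ext
      apply Prod.ext
      · rfl
      · apply Subtype.ext
        show (((x : A × B).1 : G))⁻¹ = ((x : A × B).2 : G)
        exact inv_eq_of_mul_eq_one_right hx
  have h1 := Subgroup.card_eq_card_quotient_mul_card_subgroup f.ker
  rw [Nat.card_congr (QuotientGroup.quotientKerEquivRange f).toEquiv, Nat.card_prod] at h1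
  rw [← hrange, ← hker]
  rw [h1, mul_comm]

/-- The subgroup of central elements killed by `p`. -/
def pCenterTorsion (G : Type*) [Group G] (p : ℕ) : Subgroup G where
  carrier := {g | g ∈ Subgroup.center G ∧ g ^ p = 1}
  one_mem' := ⟨Subgroup.one_mem _, one_pow p⟩
  mul_mem' := by
    rintro a b ⟨ha, hap⟩ ⟨hb, hbp⟩
    refine ⟨Subgroup.mul_mem _ ha hb, ?_⟩
    have hab : Commute a b := ((Subgroup.mem_center_iff.mp ha) b).symm
    rw [hab.mul_pow, hap, hbp, one_mul]
  inv_mem' := by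
    rintro a ⟨ha, hap⟩
    exact ⟨Subgroup.inv_mem _ ha, by rw [inv_pow, hap, inv_one]⟩

lemma mem_pCenterTorsion {G : Type*} [Group G] {p : ℕ} {g : G} :
    g ∈ pCenterTorsion G p ↔ g ∈ Subgroup.center G ∧ g ^ p = 1 := Iff.rfl

instance pCenterTorsion_normal {G : Type*} [Group G] {p : ℕ} : (pCenterTorsion G p).Normal := by
  constructor
  intro x hx g
  have hcen := Subgroup.mem_center_iff.mp hx.1 g
  have h2 : g * x * g⁻¹ = x := by rw [hcen, mul_inv_cancel_right]
  rw [h2]; exact hx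

/-- If `p` is odd and `G ≅ M_{p³}^{∘n}` (the extraspecial `p`-group of order
`p^(2n+1)` of exponent `p²`), then `n_p(G) = p^(2n) − 1`,
`n_{p²}(G) = (p−1)p^(2n)` and `ψ(G) = (p−1)p^(2n+2) + p(p^(2n) − 1) + 1`. -/
theorem orders_of_modular_central_power {p : ℕ} (hp : p.Prime) (hodd : Odd p)
    {n : ℕ} (hn : 1 ≤ n)
    (G : Type*) [Group G] [Fintype G]
    (H : Fin n → Subgroup G)
    (hcp : IsCentralProduct H)
    (hM : ∀ i, IsModularPCubed p (H i))
    (hcard : Nat.card G = p ^ (2 * n + 1)) :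
    numOfOrder G p = p ^ (2 * n) - 1 ∧
      numOfOrder G (p ^ 2) = (p - 1) * p ^ (2 * n) ∧
      ∑ x : G, orderOf x = (p - 1) * p ^ (2 * n + 2) + p * (p ^ (2 * n) - 1) + 1 := by
  obtain ⟨hcomm, htop⟩ := hcp
  have hp0 : 0 < p := hp.pos
  set Z : Fin n → Subgroup G := fun i => (Subgroup.center ↥(H i)).map (H i).subtype with hZdef
  have hKcard : ∀ i, Nat.card ↥(H i) = p ^ 3 := fun i => (hM i).1
  have hKna : ∀ i, ¬ ∀ x y : ↥(H i), Commute x y := fun i => (hM i).2.2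
  have hZcard : ∀ i, Nat.card (Z i) = p := by
    intro i
    rw [← cube_center_card hp (hKcard i) (hKna i)]
    exact (Nat.card_congr
      (Subgroup.equivMapOfInjective _ _ (Subgroup.subtype_injective (H i))).toEquiv).symm
  have hZle : ∀ i, Z i ≤ H i := by
    intro i z hz
    obtain ⟨z', _, rfl⟩ := hz
    exact z'.2
  have hmem_sup : ∀ g : G, g ∈ ⨆ i, H i := fun g => htop ▸ Subgroup.mem_top g
  have hZpow : ∀ i, ∀ z ∈ Z i, z ^ p = 1 := by
    intro i z hz
    obtain ⟨z', hz', rfl⟩ := hz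
    have h1 : (⟨z', hz'⟩ : center ↥(H i)) ^ (Nat.card (center ↥(H i))) = 1 := pow_card_eq_one'
    rw [cube_center_card hp (hKcard i) (hKna i)] at h1
    have h2 : z' ^ p = 1 := by
      have := congrArg (Subtype.val) h1
      simpa using this
    show ((H i).subtype z') ^ p = 1
    rw [← map_pow, h2, map_one]
  have hZcent : ∀ i, Z i ≤ Subgroup.center G := by
    intro i z hz
    obtain ⟨z', hz', rfl⟩ := hz
    rw [Subgroup.mem_center_iff]
    intro g
    have hcz : ∀ g, g ∈ (⨆ i, H i) → Commute ((H i).subtype z') g := by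
      intro g hg
      refine Subgroup.iSup_induction (C := fun w => Commute ((H i).subtype z') w) H hg
        (fun j x hx => ?_) (Commute.one_right _) (fun x y hx hy => hx.mul_right hy)
      by_cases hij : i = j
      · subst hij
        have hc := Subgroup.mem_center_iff.mp hz' ⟨x, hx⟩
        have := congrArg ((H i).subtype) hc
        simp only [map_mul] at this
        exact this.symm
      · exact (hcomm j i (fun h => hij h.symm) x hx _ z'.2).symm
    exact (hcz g (hmem_sup g)).symm
  have hpow_mem : ∀ i, ∀ x, ∀ hx : x ∈ H i, x ^ p ∈ Z i := by
    intro i x hx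
    exact ⟨⟨x, hx⟩ ^ p, cube_pow_mem_center hp (hKcard i) (hKna i) ⟨x, hx⟩, rfl⟩
  have hcomm_mem : ∀ i, ∀ x, ∀ hx : x ∈ H i, ∀ y, ∀ hy : y ∈ H i, ⁅x, y⁆ ∈ Z i := by
    intro i x hx y hy
    exact ⟨⁅(⟨x, hx⟩ : ↥(H i)), ⟨y, hy⟩⁆,
      cube_commutator_mem_center hp (hKcard i) (hKna i) _ _, rfl⟩
  -- W facts
  have hZW : ∀ i, Z i ≤ pCenterTorsion G p := fun i z hz => ⟨hZcent i hz, hZpow i z hz⟩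
  have hcen : ∀ a b : G, Commute ((a : G ⧸ pCenterTorsion G p)) (b : G ⧸ pCenterTorsion G p) := by
    intro a b
    refine Subgroup.iSup_induction
      (C := fun w => ∀ b : G, Commute ((w : G ⧸ pCenterTorsion G p)) (b : G ⧸ pCenterTorsion G p))
      H (hmem_sup a) (fun i x hx => ?_) (fun b => by simp) ?_ b
    · intro b
      refine Subgroup.iSup_induction
        (C := fun w => Commute ((x : G ⧸ pCenterTorsion G p)) (w : G ⧸ pCenterTorsion G p))
        H (hmem_sup b) (fun j y hy => ?_) (by simp) ?_
      · by_cases hij : i = j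
        · subst hij
          have hmem : ⁅x, y⁆ ∈ pCenterTorsion G p := hZW i (hcomm_mem i x hx y hy)
          have h1 : ((⁅x, y⁆ : G) : G ⧸ pCenterTorsion G p) = 1 :=
            (QuotientGroup.eq_one_iff _).mpr hmem
          have h2 : ⁅(x : G ⧸ pCenterTorsion G p), (y : G ⧸ pCenterTorsion G p)⁆ = 1 := h1
          exact commutatorElement_eq_one_iff_commute.mp h2
        · exact (hcomm i j hij x hx y hy).map (QuotientGroup.mk' (pCenterTorsion G p))
      · intro u v hu hv
        exact hu.mul_right hv
    · intro u v hu hv b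
      exact (hu b).mul_left (hv b)
  have hcommW : ∀ g h : G, ⁅g, h⁆ ∈ pCenterTorsion G p := by
    intro g h
    have h1 : ⁅(g : G ⧸ pCenterTorsion G p), (h : G ⧸ pCenterTorsion G p)⁆ = 1 :=
      commutatorElement_eq_one_iff_commute.mpr (hcen g h)
    exact (QuotientGroup.eq_one_iff _).mp h1
  -- the p-th power homomorphism
  have hmapmul : ∀ g h : G, (g * h) ^ p = g ^ p * h ^ p := by
    intro g h
    have hcW := hcommW h g
    set c := ⁅h, g⁆ with hcdef
    have hcg : Commute c g := ((Subgroup.mem_center_iff.mp hcW.1) g).symm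
    have hch : Commute c h := ((Subgroup.mem_center_iff.mp hcW.1) h).symm
    have hgh : h * g = g * (h * c) := by
      have h1 : c * (g * h) = h * g := by
        rw [hcdef, commutatorElement_def]; group
      calc h * g = c * (g * h) := h1.symm
        _ = (g * h) * c := (hcg.mul_right hch).eq
        _ = g * (h * c) := mul_assoc _ _ _
    rw [pow_aux g h c hgh hcg hch p, pow_choose_two_eq_one hodd hcW.2, mul_one]
  let φ : G →* G := MonoidHom.mk' (fun g => g ^ p) hmapmul
  have hφ : ∀ g : G, φ g = g ^ p := fun g => rfl
  classical
  set P : Finset (Fin n) → Subgroup G := fun s => ⨆ k ∈ s, H k with hPdef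
  have hPins : ∀ (k) (s : Finset (Fin n)), P (insert k s) = H k ⊔ P s := by
    intro k s
    apply le_antisymm
    · refine iSup₂_le fun x hx => ?_
      rcases Finset.mem_insert.mp hx with rfl | hx
      · exact le_sup_left
      · exact le_sup_of_le_right (le_iSup₂ (f := fun x _ => H x) x hx)
    · refine sup_le (le_iSup₂ (f := fun x _ => H x) k (Finset.mem_insert_self k s))
        (iSup₂_le fun x hx => le_iSup₂ (f := fun x _ => H x) x (Finset.mem_insert_of_mem hx))
  have hPsingle : ∀ j, P {j} = H j := by
    intro j
    apply le_antisymm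
    · refine iSup₂_le fun x hx => ?_
      rw [Finset.mem_singleton] at hx; subst hx; exact le_rfl
    · exact le_iSup₂ (f := fun x _ => H x) j (Finset.mem_singleton_self j)
  have hPuniv : P Finset.univ = ⊤ := by
    rw [← htop]
    apply le_antisymm
    · exact iSup₂_le fun x _ => le_iSup H x
    · exact iSup_le fun x => le_iSup₂ (f := fun x _ => H x) x (Finset.mem_univ x)
  have hPcomm : ∀ (s : Finset (Fin n)) (k), k ∉ s → ∀ a ∈ P s, ∀ b ∈ H k, Commute a b := by
    intro s k hk a ha b hb
    have ha' : a ∈ ⨆ j : {j : Fin n // j ∈ s}, H j.1 := by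
      simp only [hPdef] at ha
      rwa [iSup_subtype'] at ha
    refine Subgroup.iSup_induction (C := fun w => Commute w b)
      (fun j : {j : Fin n // j ∈ s} => H j.1) ha' (fun j x hx => ?_) (Commute.one_left b)
      (fun x y hx hy => hx.mul_left hy)
    exact hcomm j.1 k (fun h => hk (h ▸ j.2)) x hx b hb
  have hPint : ∀ (s : Finset (Fin n)) (k), k ∉ s → Nat.card (P s ⊓ H k : Subgroup G) ≤ p := by
    intro s k hk
    have hsub : P s ⊓ H k ≤ Z k := by
      intro x hx
      obtain ⟨hxs, hxk⟩ := Subgroup.mem_inf.mp hx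
      refine ⟨⟨x, hxk⟩, ?_, rfl⟩
      show (⟨x, hxk⟩ : ↥(H k)) ∈ center ↥(H k)
      rw [Subgroup.mem_center_iff]
      intro b
      apply Subtype.ext
      show (b : G) * x = x * (b : G)
      exact (hPcomm s k hk x hxs b b.2).symm
    have hdvd := card_dvd_of_le hsub
    rw [hZcard k] at hdvd
    exact Nat.le_of_dvd hp0 hdvd
  have hstep : ∀ (s : Finset (Fin n)) (k), k ∉ s →
      Nat.card (P s) * p ^ 3 ≤ Nat.card (P (insert k s)) * p := by
    intro s k hk
    have heq := card_sup_mul_card_inf (P s) (H k) (hPcomm s k hk)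
    rw [hKcard k] at heq
    rw [hPins k s, sup_comm]
    calc Nat.card (P s) * p ^ 3
        = Nat.card (P s ⊔ H k : Subgroup G) * Nat.card (P s ⊓ H k : Subgroup G) := heq.symm
      _ ≤ Nat.card (P s ⊔ H k : Subgroup G) * p := Nat.mul_le_mul_left _ (hPint s k hk)
  have hinter : ∀ i j : Fin n, i ≠ j → H i ⊓ H j = Z i := by
    intro i j hij
    have hle : H i ⊓ H j ≤ Z i := by
      intro x hx
      obtain ⟨hxi, hxj⟩ := Subgroup.mem_inf.mp hx
      refine ⟨⟨x, hxi⟩, ?_, rfl⟩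
      show (⟨x, hxi⟩ : ↥(H i)) ∈ center ↥(H i)
      rw [Subgroup.mem_center_iff]
      intro b
      apply Subtype.ext
      show (b : G) * x = x * (b : G)
      exact ((hcomm j i (Ne.symm hij) x hxj b b.2).symm).eq
    have heq := card_sup_mul_card_inf (H i) (H j) (hcomm i j hij)
    rw [hKcard i, hKcard j] at heq
    set d := Nat.card (H i ⊓ H j : Subgroup G) with hddef
    have hbase : d * Nat.card (P {i, j}) = p ^ 6 := by
      have h2 : P {i, j} = H i ⊔ H j := by
        rw [show ({i, j} : Finset (Fin n)) = insert i {j} from rfl, hPins, hPsingle]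
      rw [h2, mul_comm d, heq, ← pow_add]
    have hchain : ∀ t : Finset (Fin n), Disjoint t {i, j} →
        p ^ (6 + 2 * t.card) ≤ d * Nat.card (P ({i, j} ∪ t)) := by
      intro t
      induction t using Finset.induction_on with
      | empty => intro _; rw [Finset.union_empty]; simpa using le_of_eq hbase.symm
      | @insert k t' hk ih =>
        intro hdisj
        have hki : k ∉ ({i, j} : Finset (Fin n)) :=
          fun hmem => (Finset.disjoint_left.mp hdisj (Finset.mem_insert_self k t') hmem)
        have hdisj' : Disjoint t' ({i, j} : Finset (Fin n)) :=
          Finset.disjoint_of_subset_left (Finset.subset_insert k t') hdisj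
        have ihh := ih hdisj'
        have hknot : k ∉ ({i, j} ∪ t' : Finset (Fin n)) := by
          rw [Finset.mem_union]
          rintro (h | h)
          · exact hki h
          · exact hk h
        have hins : ({i, j} : Finset (Fin n)) ∪ insert k t' = insert k ({i, j} ∪ t') :=
          Finset.union_insert k {i, j} t'
        have hstep' := hstep ({i, j} ∪ t') k hknot
        rw [hins, Finset.card_insert_of_notMem hk]
        have h1 : p ^ (6 + 2 * t'.card) * p ^ 3 ≤ (d * Nat.card (P ({i, j} ∪ t'))) * p ^ 3 :=
          Nat.mul_le_mul_right _ ihh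
        have h2 : (d * Nat.card (P ({i, j} ∪ t'))) * p ^ 3 ≤
            (d * Nat.card (P (insert k ({i, j} ∪ t')))) * p := by
          rw [mul_assoc, mul_assoc]
          exact Nat.mul_le_mul_left d hstep'
        have h3 : p ^ (6 + 2 * (t'.card + 1)) * p = p ^ (6 + 2 * t'.card) * p ^ 3 := by
          have he : 6 + 2 * (t'.card + 1) + 1 = 6 + 2 * t'.card + 3 := by omega
          rw [← pow_succ, he, pow_add]
        have h4 : p ^ (6 + 2 * (t'.card + 1)) * p ≤
            (d * Nat.card (P (insert k ({i, j} ∪ t')))) * p := by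
          rw [h3]; exact le_trans h1 h2
        exact Nat.le_of_mul_le_mul_right h4 hp0
    have hdisj : Disjoint (Finset.univ \ {i, j}) ({i, j} : Finset (Fin n)) :=
      Finset.sdiff_disjoint
    have hch := hchain _ hdisj
    rw [Finset.union_sdiff_of_subset (Finset.subset_univ _), hPuniv,
      Finset.card_sdiff_of_subset (Finset.subset_univ _), Finset.card_univ, Fintype.card_fin,
      Finset.card_pair hij, Subgroup.card_top, hcard] at hch
    have hn2 : 2 ≤ n := by
      have h5 : (1 : ℕ) < Fintype.card (Fin n) :=
        Fintype.one_lt_card_iff_nontrivial.mpr ⟨⟨i, j, hij⟩⟩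
      rwa [Fintype.card_fin] at h5
    have hexp : 6 + 2 * (n - 2) = (2 * n + 1) + 1 := by omega
    rw [hexp, pow_succ, mul_comm d] at hch
    have hpd : p ≤ d := Nat.le_of_mul_le_mul_left hch (pow_pos hp0 _)
    exact Subgroup.eq_of_le_of_card_ge hle (by rw [hZcard i]; exact hpd)
  have hZeq : ∀ i j, Z i = Z j := by
    intro i j
    rcases eq_or_ne i j with rfl | hij
    · rfl
    · rw [← hinter i j hij, ← hinter j i (Ne.symm hij), inf_comm]
  set i₀ : Fin n := ⟨0, hn⟩ with hi₀
  have hone : (1 : G) ^ p ∈ Z i₀ := by rw [one_pow]; exact one_mem _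
  have hrange : ∀ g : G, g ^ p ∈ Z i₀ := by
    intro g
    refine Subgroup.iSup_induction (C := fun w => w ^ p ∈ Z i₀) H (hmem_sup g)
      (fun i x hx => ?_) hone (fun x y hx hy => ?_)
    · exact hZeq i i₀ ▸ hpow_mem i x hx
    · show (x * y) ^ p ∈ Z i₀
      rw [hmapmul x y]; exact mul_mem hx hy
  have hrle : φ.range ≤ Z i₀ := by rintro x ⟨g, rfl⟩; exact hrange g
  have hx0 : ∃ g : G, g ^ p ≠ 1 := by
    by_contra hall
    push_neg at hall
    have hdvd : Monoid.exponent ↥(H i₀) ∣ p :=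
      Monoid.exponent_dvd_of_forall_pow_eq_one fun x => Subtype.ext (by push_cast; exact hall x)
    rw [(hM i₀).2.1] at hdvd
    have hle2 := Nat.le_of_dvd hp0 hdvd
    have h2l := hp.two_le
    nlinarith
  have hrnbot : φ.range ≠ ⊥ := by
    obtain ⟨g, hg⟩ := hx0
    intro hbot
    apply hg
    have hmem : g ^ p ∈ φ.range := ⟨g, rfl⟩
    rw [hbot] at hmem
    exact Subgroup.mem_bot.mp hmem
  have hrcard : Nat.card φ.range = p := by
    have hdvd : Nat.card φ.range ∣ p := by
      rw [← hZcard i₀]; exact card_dvd_of_le hrle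
    rcases (Nat.Prime.eq_one_or_self_of_dvd hp _ hdvd) with h1 | h2
    · exact absurd (Subgroup.card_eq_one.mp h1) hrnbot
    · exact h2
  have hkcard : Nat.card φ.ker = p ^ (2 * n) := by
    have h1 := Subgroup.card_eq_card_quotient_mul_card_subgroup φ.ker
    rw [Nat.card_congr (QuotientGroup.quotientKerEquivRange φ).toEquiv, hrcard, hcard,
      pow_succ, mul_comm (p ^ (2 * n)) p] at h1
    exact (Nat.eq_of_mul_eq_mul_left hp0 h1).symm
  have hkmem : ∀ g : G, g ∈ φ.ker ↔ g ^ p = 1 := fun g => Iff.rfl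
  have hexp2 : ∀ g : G, g ^ (p ^ 2) = 1 := by
    intro g
    rw [pow_two, pow_mul]
    exact hZpow i₀ _ (hrange g)
  have hordvd : ∀ g : G, orderOf g ∣ p ^ 2 := fun g => orderOf_dvd_of_pow_eq_one (hexp2 g)
  have hnotker : ∀ g : G, g ∉ φ.ker ↔ orderOf g = p ^ 2 := by
    intro g
    constructor
    · intro hg
      obtain ⟨k, hk, hok⟩ := (Nat.dvd_prime_pow hp).mp (hordvd g)
      interval_cases k
      · exfalso
        apply hg
        rw [hkmem]
        rw [pow_zero] at hok
        rw [orderOf_eq_one_iff.mp hok, one_pow]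
      · exfalso
        apply hg
        rw [hkmem]
        rw [pow_one] at hok
        exact orderOf_dvd_iff_pow_eq_one.mp (by rw [hok])
      · exact hok
    · intro ho hg
      rw [hkmem] at hg
      have hdd := orderOf_dvd_of_pow_eq_one hg
      rw [ho] at hdd
      have h5 := Nat.le_of_dvd hp0 hdd
      have h2l := hp.two_le
      nlinarith
  have hkerp : ∀ g : G, (g ∈ φ.ker ∧ g ≠ 1) ↔ orderOf g = p := by
    intro g
    constructor
    · rintro ⟨hg, hg1⟩
      rw [hkmem] at hg
      have hdd := orderOf_dvd_of_pow_eq_one hg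
      rcases (Nat.Prime.eq_one_or_self_of_dvd hp _ hdd) with h1 | h2
      · exact absurd (orderOf_eq_one_iff.mp h1) hg1
      · exact h2
    · intro ho
      refine ⟨?_, ?_⟩
      · rw [hkmem]
        exact orderOf_dvd_iff_pow_eq_one.mp (by rw [ho])
      · intro h1
        rw [h1, orderOf_one] at ho
        exact hp.one_lt.ne ho
  have hcardG : (Finset.univ : Finset G).card = p ^ (2 * n + 1) := by
    rw [Finset.card_univ, ← Nat.card_eq_fintype_card, hcard]
  have hKF : (Finset.univ.filter (fun x : G => x ∈ φ.ker)).card = p ^ (2 * n) := by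
    rw [← hkcard, Nat.card_eq_fintype_card, Fintype.card_subtype]
  have h1mem : (1 : G) ∈ Finset.univ.filter (fun x : G => x ∈ φ.ker) :=
    Finset.mem_filter.mpr ⟨Finset.mem_univ 1, one_mem _⟩
  have hfp : Finset.univ.filter (fun x : G => orderOf x = p)
      = (Finset.univ.filter (fun x : G => x ∈ φ.ker)).erase 1 := by
    ext x
    rw [Finset.mem_erase, Finset.mem_filter, Finset.mem_filter]
    constructor
    · rintro ⟨_, hx⟩
      have h6 := (hkerp x).mpr hx
      exact ⟨h6.2, Finset.mem_univ x, h6.1⟩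
    · rintro ⟨hne, _, hker⟩
      exact ⟨Finset.mem_univ x, (hkerp x).mp ⟨hker, hne⟩⟩
  have hfp2 : Finset.univ.filter (fun x : G => orderOf x = p ^ 2)
      = Finset.univ.filter (fun x : G => ¬ x ∈ φ.ker) := by
    ext x
    simp only [Finset.mem_filter, Finset.mem_univ, true_and]
    exact ⟨fun h => (hnotker x).mpr h, fun h => (hnotker x).mp h⟩
  have hsub1 : p ^ (2 * n + 1) - p ^ (2 * n) = (p - 1) * p ^ (2 * n) := by
    rw [Nat.sub_mul, one_mul, ← pow_succ']
  have hcard_notker : (Finset.univ.filter (fun x : G => ¬ x ∈ φ.ker)).card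
      = p ^ (2 * n + 1) - p ^ (2 * n) := by
    rw [Finset.filter_not, Finset.card_sdiff_of_subset (Finset.filter_subset _ _), hcardG, hKF]
  refine ⟨?_, ?_, ?_⟩
  · show Nat.card {x : G // orderOf x = p} = p ^ (2 * n) - 1
    rw [Nat.card_eq_fintype_card, Fintype.card_subtype, hfp,
      Finset.card_erase_of_mem h1mem, hKF]
  · show Nat.card {x : G // orderOf x = p ^ 2} = (p - 1) * p ^ (2 * n)
    rw [Nat.card_eq_fintype_card, Fintype.card_subtype, hfp2, hcard_notker, hsub1]
  · have hsplit := Finset.sum_filter_add_sum_filter_not Finset.univ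
      (fun x : G => x ∈ φ.ker) (fun x => orderOf x)
    have hs2 : ∑ x ∈ Finset.univ.filter (fun x : G => ¬ x ∈ φ.ker), orderOf x
        = (p - 1) * p ^ (2 * n + 2) := by
      calc ∑ x ∈ Finset.univ.filter (fun x : G => ¬ x ∈ φ.ker), orderOf x
          = ∑ _x ∈ Finset.univ.filter (fun x : G => ¬ x ∈ φ.ker), p ^ 2 :=
            Finset.sum_congr rfl fun x hx =>
              (hnotker x).mp (Finset.mem_filter.mp hx).2
        _ = (p ^ (2 * n + 1) - p ^ (2 * n)) * p ^ 2 := by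
            rw [Finset.sum_const, smul_eq_mul, hcard_notker]
        _ = (p - 1) * p ^ (2 * n + 2) := by
            rw [hsub1, mul_assoc, ← pow_add]
    have hs1 : ∑ x ∈ Finset.univ.filter (fun x : G => x ∈ φ.ker), orderOf x
        = 1 + (p ^ (2 * n) - 1) * p := by
      have hsplit2 := Finset.sum_filter_add_sum_filter_not
        (Finset.univ.filter (fun x : G => x ∈ φ.ker)) (fun x : G => x = 1)
        (fun x => orderOf x)
      rw [← hsplit2]
      have hae : (Finset.univ.filter (fun x : G => x ∈ φ.ker)).filter
          (fun x : G => x = 1) = {1} := by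
        ext x
        simp only [Finset.mem_filter, Finset.mem_singleton]
        constructor
        · rintro ⟨_, h⟩; exact h
        · rintro rfl; exact ⟨Finset.mem_filter.mp h1mem, rfl⟩
      have ha : ∑ x ∈ (Finset.univ.filter (fun x : G => x ∈ φ.ker)).filter
          (fun x : G => x = 1), orderOf x = 1 := by
        rw [hae, Finset.sum_singleton, orderOf_one]
      have hb : ∑ x ∈ (Finset.univ.filter (fun x : G => x ∈ φ.ker)).filter
          (fun x : G => ¬ x = 1), orderOf x = (p ^ (2 * n) - 1) * p := by
        have hbe : (Finset.univ.filter (fun x : G => x ∈ φ.ker)).filter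
            (fun x : G => ¬ x = 1)
            = (Finset.univ.filter (fun x : G => x ∈ φ.ker)).erase 1 := by
          ext x
          simp only [Finset.mem_filter, Finset.mem_erase]
          tauto
        rw [hbe]
        calc ∑ x ∈ (Finset.univ.filter (fun x : G => x ∈ φ.ker)).erase 1, orderOf x
            = ∑ _x ∈ (Finset.univ.filter (fun x : G => x ∈ φ.ker)).erase 1, p := by
              refine Finset.sum_congr rfl fun x hx => ?_
              obtain ⟨hne, hmem⟩ := Finset.mem_erase.mp hx
              exact (hkerp x).mp ⟨(Finset.mem_filter.mp hmem).2, hne⟩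
          _ = (p ^ (2 * n) - 1) * p := by
              rw [Finset.sum_const, smul_eq_mul, Finset.card_erase_of_mem h1mem, hKF]
      rw [ha, hb]
    rw [← hsplit, hs1, hs2, mul_comm (p ^ (2 * n) - 1) p]
    omega
  -- done
end

section
/- Let p be an odd prime and G ≅ He_p^{∘n} ∘ C_{p²} (an almost extraspecial p-group of order p^{2n+2}). Then n_p(G) = p^{2n+1} − 1, n_{p²}(G) = (p−1)p^{2n+1}, and ψ(G) = (p−1)p^{2n+3} + p(p^{2n+1} − 1) + 1. -/
/-- `K` is (isomorphic to) the Heisenberg group `He_p` of order `p³`: the unique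
nonabelian group of order `p³` and exponent `p` (`p` odd). -/
def IsHeisenberg (p : ℕ) (K : Type*) [Group K] : Prop :=
  Nat.card K = p ^ 3 ∧ Monoid.exponent K = p ∧ ¬ ∀ x y : K, Commute x y

open scoped commutatorElement


/-- In a group, if `y * x = x * y * c` with `c` central, then
`(x*y)^m = x^m * y^m * c^(m choose 2)`. -/
lemma pow_mul_pow_of_central {G : Type*} [Group G] (x y c : G)
    (h : y * x = x * y * c) (hc : ∀ g : G, c * g = g * c) :
    ∀ m : ℕ, (x * y) ^ m = x ^ m * y ^ m * c ^ m.choose 2 := by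
  have hcpow : ∀ (k : ℕ) (g : G), c ^ k * g = g * c ^ k := fun k g =>
    (Commute.pow_left (show Commute c g from hc g) k).eq
  have haux : ∀ m : ℕ, y ^ m * x = x * y ^ m * c ^ m := by
    intro m
    induction m with
    | zero => simp
    | succ m ih =>
      calc y ^ (m + 1) * x = y * (y ^ m * x) := by rw [pow_succ']; rw [mul_assoc]
        _ = y * (x * y ^ m * c ^ m) := by rw [ih]
        _ = (y * x) * y ^ m * c ^ m := by simp only [mul_assoc]
        _ = (x * y * c) * y ^ m * c ^ m := by rw [h]
        _ = x * y ^ (m + 1) * c ^ (m + 1) := by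
            rw [pow_succ' y, pow_succ' c]
            simp only [mul_assoc]
            rw [← mul_assoc c (y ^ m), hc (y ^ m)]
            simp only [mul_assoc]
  intro m
  induction m with
  | zero => simp
  | succ m ih =>
    calc (x * y) ^ (m + 1) = (x * y) ^ m * (x * y) := pow_succ _ _
      _ = (x ^ m * y ^ m * c ^ m.choose 2) * (x * y) := by rw [ih]
      _ = x ^ m * ((y ^ m * x) * (y * c ^ m.choose 2)) := by
          simp only [mul_assoc]
          rw [← mul_assoc (c ^ m.choose 2) x y, hcpow _ x, mul_assoc x, hcpow _ y]
      _ = x ^ m * ((x * y ^ m * c ^ m) * (y * c ^ m.choose 2)) := by rw [haux m]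
      _ = x ^ (m + 1) * y ^ (m + 1) * c ^ ((m + 1).choose 2) := by
          rw [Nat.choose_succ_succ m 1, Nat.choose_one_right, pow_succ x, pow_succ y,
            pow_add c]
          simp only [mul_assoc]
          rw [← mul_assoc (c ^ m) y, hcpow m y]
          simp only [mul_assoc]

/-- In a nonabelian group of order `p ^ 3`, all commutators are central. -/
lemma comm_mem_center_of_card_p3 {p : ℕ} (hp : p.Prime) {K : Type*} [Group K]
    (hcard : Nat.card K = p ^ 3) (hna : ¬ ∀ x y : K, Commute x y) (a b : K) :
    ⁅a, b⁆ ∈ Subgroup.center K := by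
  haveI : Fact p.Prime := ⟨hp⟩
  haveI hfin : Finite K := Nat.finite_of_card_ne_zero
    (by rw [hcard]; exact pow_ne_zero _ hp.pos.ne')
  obtain ⟨k, hk0, hk⟩ := IsPGroup.card_center_eq_prime_pow hcard (by norm_num)
  have hq : Nat.card (K ⧸ Subgroup.center K) * Nat.card (Subgroup.center K) = p ^ 3 := by
    rw [← Subgroup.card_eq_card_quotient_mul_card_subgroup, hcard]
  have hnotcyc : ¬ IsCyclic (K ⧸ Subgroup.center K) := by
    intro hcyc
    exact hna fun x y =>
      commutative_of_cyclic_center_quotient (QuotientGroup.mk' (Subgroup.center K))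
        (le_of_eq (QuotientGroup.ker_mk' _)) x y
  have hk3 : k ≤ 3 := by
    have : p ^ k ∣ p ^ 3 := ⟨Nat.card (K ⧸ Subgroup.center K), by rw [← hq, hk, mul_comm]⟩
    exact (Nat.pow_dvd_pow_iff_le_right hp.one_lt).mp this
  have hk1 : k = 1 := by
    by_contra hne
    have hk2 : 2 ≤ k := by omega
    have hqcard : Nat.card (K ⧸ Subgroup.center K) = p ^ (3 - k) := by
      have : p ^ (3 - k) * p ^ k = p ^ 3 := by rw [← pow_add]; congr 1; omega
      exact Nat.eq_of_mul_eq_mul_right (pow_pos hp.pos k) (by rw [this, ← hk]; exact hq)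
    have : Nat.card (K ⧸ Subgroup.center K) ∣ p := by
      rw [hqcard]
      exact (pow_dvd_pow p (by omega : 3 - k ≤ 1)).trans (by rw [pow_one])
    exact hnotcyc (isCyclic_of_card_dvd_prime this)
  have hqcard : Nat.card (K ⧸ Subgroup.center K) = p ^ 2 := by
    rw [hk1] at hk
    have : p ^ 2 * p ^ 1 = p ^ 3 := by rw [← pow_add]
    exact Nat.eq_of_mul_eq_mul_right (pow_pos hp.pos 1) (by rw [this, ← hk]; exact hq)
  have hcomm := IsPGroup.commutative_of_card_eq_prime_sq hqcard
  have : (QuotientGroup.mk' (Subgroup.center K)) ⁅a, b⁆ = 1 := by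
    rw [map_commutatorElement]
    exact commutatorElement_eq_one_iff_mul_comm.mpr (hcomm _ _)
  rwa [← MonoidHom.mem_ker, QuotientGroup.ker_mk'] at this

/-- The `p`-torsion of a subgroup whose elements pairwise commute, as a subgroup. -/
def commTor {G : Type*} [Group G] (C : Subgroup G) (p : ℕ)
    (hcomm : ∀ x ∈ C, ∀ y ∈ C, x * y = y * x) : Subgroup G where
  carrier := {x | x ∈ C ∧ x ^ p = 1}
  one_mem' := ⟨C.one_mem, one_pow p⟩
  mul_mem' := by
    rintro a b ⟨haC, ha⟩ ⟨hbC, hb⟩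
    exact ⟨C.mul_mem haC hbC, by
      rw [(show Commute a b from hcomm a haC b hbC).mul_pow, ha, hb, one_mul]⟩
  inv_mem' := by
    rintro a ⟨haC, ha⟩
    exact ⟨C.inv_mem haC, by rw [inv_pow, ha, inv_one]⟩

lemma mem_commTor {G : Type*} [Group G] {C : Subgroup G} {p : ℕ}
    {hcomm : ∀ x ∈ C, ∀ y ∈ C, x * y = y * x} {x : G} :
    x ∈ commTor C p hcomm ↔ x ∈ C ∧ x ^ p = 1 := Iff.rfl

/-- If `p` is odd and `G ≅ He_p^{∘n} ∘ C_{p²}` (the almost extraspecial `p`-group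
of order `p^(2n+2)`), then `n_p(G) = p^(2n+1) − 1`, `n_{p²}(G) = (p−1)p^(2n+1)`
and `ψ(G) = (p−1)p^(2n+3) + p(p^(2n+1) − 1) + 1`. -/
theorem orders_of_almost_extraspecial_odd {p : ℕ} (hp : p.Prime) (hodd : Odd p)
    {n : ℕ} (hn : 1 ≤ n)
    (G : Type*) [Group G] [Fintype G]
    (H : Option (Fin n) → Subgroup G)
    (hcp : IsCentralProduct H)
    (hHe : ∀ i : Fin n, IsHeisenberg p (H (some i)))
    (hC : IsCyclic (H none) ∧ Nat.card (H none) = p ^ 2)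
    (hcard : Nat.card G = p ^ (2 * n + 2)) :
    numOfOrder G p = p ^ (2 * n + 1) - 1 ∧
      numOfOrder G (p ^ 2) = (p - 1) * p ^ (2 * n + 1) ∧
      ∑ x : G, orderOf x = (p - 1) * p ^ (2 * n + 3) + p * (p ^ (2 * n + 1) - 1) + 1 := by
  classical
  haveI := hC.1
  set S : Set G := ⋃ i, (H i : Set G) with hS
  have htop : Subgroup.closure S = ⊤ := by
    rw [← Subgroup.iSup_eq_closure]; exact hcp.2
  -- every element of a Heisenberg factor has p-torsion
  have hHe_tor : ∀ i : Fin n, ∀ x ∈ H (some i), x ^ p = 1 := by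
    intro i x hx
    have h1 : (⟨x, hx⟩ : H (some i)) ^ p = 1 := by
      rw [← (hHe i).2.1]; exact Monoid.pow_exponent_eq_one _
    simpa using congrArg Subtype.val h1
  -- the cyclic factor is commutative
  have hCcomm : ∀ x ∈ H none, ∀ y ∈ H none, x * y = y * x := by
    obtain ⟨g, hg⟩ := IsCyclic.exists_generator (α := ↥(H none))
    intro x hx y hy
    obtain ⟨m, hm⟩ := Subgroup.mem_zpowers_iff.mp (hg ⟨x, hx⟩)
    obtain ⟨l, hl⟩ := Subgroup.mem_zpowers_iff.mp (hg ⟨y, hy⟩)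
    have hx' : x = (g : G) ^ m := by
      simpa using (congrArg Subtype.val hm).symm
    have hy' : y = (g : G) ^ l := by
      simpa using (congrArg Subtype.val hl).symm
    rw [hx', hy', ← zpow_add, ← zpow_add, add_comm]
  -- the cyclic factor has p²-torsion
  have hCtor : ∀ x ∈ H none, x ^ (p ^ 2) = 1 := by
    intro x hx
    have h1 : (⟨x, hx⟩ : H none) ^ (p ^ 2) = 1 := by
      rw [← hC.2]; exact pow_card_eq_one'
    simpa using congrArg Subtype.val h1
  -- anything commuting with one factor is central
  have hcent : ∀ (i : Option (Fin n)) (z : G), z ∈ H i →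
      (∀ y ∈ H i, Commute z y) → z ∈ Subgroup.center G := by
    intro i z hz hcz
    rw [Subgroup.mem_center_iff]
    intro g
    have hg : g ∈ Subgroup.closure S := htop ▸ Subgroup.mem_top g
    induction hg using Subgroup.closure_induction with
    | mem s hs =>
      obtain ⟨j, hsj⟩ := Set.mem_iUnion.mp hs
      by_cases hij : j = i
      · subst hij; exact (hcz s hsj).eq.symm
      · exact (hcp.1 i j (fun h => hij h.symm) z hz s hsj).eq.symm
    | one => rw [one_mul, mul_one]
    | mul a b _ _ ha hb => rw [mul_assoc, hb, ← mul_assoc, ha, mul_assoc]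
    | inv a _ ha =>
      have h6 : a⁻¹ * (z * a) * a⁻¹ = a⁻¹ * (a * z) * a⁻¹ := by rw [ha]
      calc a⁻¹ * z = a⁻¹ * (z * a) * a⁻¹ := by group
        _ = a⁻¹ * (a * z) * a⁻¹ := h6
        _ = z * a⁻¹ := by group
  -- the subgroup of central p-torsion elements
  have hZcomm : ∀ x ∈ Subgroup.center G, ∀ y ∈ Subgroup.center G, x * y = y * x :=
    fun x hx y _ => (Subgroup.mem_center_iff.mp hx y).symm
  set K : Subgroup G := commTor (Subgroup.center G) p hZcomm with hK
  have hKcentral : ∀ g ∈ K, ∀ h : G, g * h = h * g := fun g hg h =>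
    (Subgroup.mem_center_iff.mp hg.1 h).symm
  have hconj : ∀ g ∈ K, ∀ a : G, a * g * a⁻¹ = g := by
    intro g hg a
    rw [← hKcentral g hg a, mul_inv_cancel_right]
  -- commutators of generators are in K
  have hSS : ∀ s ∈ S, ∀ t ∈ S, ⁅s, t⁆ ∈ K := by
    intro s hs t ht
    obtain ⟨i, hsi⟩ := Set.mem_iUnion.mp hs
    obtain ⟨j, htj⟩ := Set.mem_iUnion.mp ht
    by_cases hij : i = j
    · subst hij
      match i with
      | none =>
        rw [commutatorElement_eq_one_iff_mul_comm.mpr (hCcomm s hsi t htj)]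
        exact K.one_mem
      | some k =>
        have h3 := comm_mem_center_of_card_p3 hp (hHe k).1 (hHe k).2.2
          (⟨s, hsi⟩ : H (some k)) ⟨t, htj⟩
        have hmemH : ⁅s, t⁆ ∈ H (some k) :=
          (⁅(⟨s, hsi⟩ : H (some k)), (⟨t, htj⟩ : H (some k))⁆ : H (some k)).2
        refine ⟨hcent (some k) _ hmemH ?_, hHe_tor k _ hmemH⟩
        intro y hy
        have h4 := Subgroup.mem_center_iff.mp h3 ⟨y, hy⟩
        exact (congrArg Subtype.val h4).symm
    · rw [commutatorElement_eq_one_iff_commute.mpr (hcp.1 i j hij s hsi t htj)]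
      exact K.one_mem
  -- commutator identities
  have id1 : ∀ s a b : G, ⁅s, a * b⁆ = ⁅s, a⁆ * (a * ⁅s, b⁆ * a⁻¹) := by
    intro s a b; simp only [commutatorElement_def]; group
  have id2 : ∀ s a : G, ⁅s, a⁻¹⁆ = a⁻¹ * ⁅s, a⁆⁻¹ * a := by
    intro s a; simp only [commutatorElement_def]; group
  have id3 : ∀ a b y : G, ⁅a * b, y⁆ = (a * ⁅b, y⁆ * a⁻¹) * ⁅a, y⁆ := by
    intro a b y; simp only [commutatorElement_def]; group
  have id4 : ∀ a y : G, ⁅a⁻¹, y⁆ = a⁻¹ * ⁅a, y⁆⁻¹ * a := by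
    intro a y; simp only [commutatorElement_def]; group
  -- all commutators are central p-torsion
  have hcommK : ∀ x y : G, ⁅x, y⁆ ∈ K := by
    have step : ∀ s : G, (∀ t ∈ S, ⁅s, t⁆ ∈ K) → ∀ y : G, ⁅s, y⁆ ∈ K := by
      intro s hsK y
      have hy : y ∈ Subgroup.closure S := htop ▸ Subgroup.mem_top y
      induction hy using Subgroup.closure_induction with
      | mem t ht => exact hsK t ht
      | one => rw [show ⁅s, (1 : G)⁆ = 1 by simp only [commutatorElement_def]; group]
               exact K.one_mem
      | mul a b _ _ iha ihb =>
        rw [id1 s a b, hconj _ ihb a]; exact K.mul_mem iha ihb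
      | inv a _ iha =>
        have h5 := hconj _ (K.inv_mem iha) a⁻¹
        rw [inv_inv] at h5
        rw [id2 s a, h5]; exact K.inv_mem iha
    intro x y
    have hx : x ∈ Subgroup.closure S := htop ▸ Subgroup.mem_top x
    refine Subgroup.closure_induction
      (p := fun x _ => ∀ y : G, ⁅x, y⁆ ∈ K) ?_ ?_ ?_ ?_ hx y
    · intro t ht y; exact step t (hSS t ht) y
    · intro y
      rw [show ⁅(1 : G), y⁆ = 1 by simp only [commutatorElement_def]; group]
      exact K.one_mem
    · intro a b _ _ iha ihb y
      rw [id3 a b y, hconj _ (ihb y) a]; exact K.mul_mem (ihb y) (iha y)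
    · intro a _ iha y
      have h5 := hconj _ (K.inv_mem (iha y)) a⁻¹
      rw [inv_inv] at h5
      rw [id4 a y, h5]; exact K.inv_mem (iha y)
  -- the p-power map is a homomorphism
  have hmul : ∀ x y : G, (x * y) ^ p = x ^ p * y ^ p := by
    intro x y
    have hcK := hcommK y⁻¹ x⁻¹
    have hrel : y * x = x * y * ⁅y⁻¹, x⁻¹⁆ := by
      simp only [commutatorElement_def]; group
    have h := pow_mul_pow_of_central x y _ hrel (fun g => hKcentral _ hcK g) p
    have h2dvd : 2 ∣ p - 1 := (Nat.Odd.sub_odd hodd odd_one).two_dvd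
    rw [h, Nat.choose_two_right, Nat.mul_div_assoc p h2dvd, pow_mul, hcK.2, one_pow, mul_one]
  set φ : G →* G := MonoidHom.mk' (fun x => x ^ p) hmul with hφ
  set P : Subgroup G := commTor (H none) p hCcomm with hP
  have hrangeP : φ.range ≤ P := by
    rw [MonoidHom.range_eq_map, ← htop, MonoidHom.map_closure, Subgroup.closure_le]
    rintro g ⟨s, hsS, rfl⟩
    obtain ⟨i, hsi⟩ := Set.mem_iUnion.mp hsS
    match i with
    | none =>
      exact ⟨(H none).pow_mem hsi p, by
        show (s ^ p) ^ p = 1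
        rw [← pow_mul, ← pow_two]; exact hCtor s hsi⟩
    | some k =>
      show s ^ p ∈ P
      rw [hHe_tor k s hsi]; exact P.one_mem
  have hx2 : ∀ x : G, x ^ (p ^ 2) = 1 := by
    intro x
    have hm : x ^ p ∈ φ.range := ⟨x, rfl⟩
    have := (hrangeP hm).2
    rwa [← pow_mul, ← pow_two] at this
  -- a generator of the cyclic factor has order p²
  obtain ⟨g, hg⟩ := IsCyclic.exists_generator (α := ↥(H none))
  have hog : orderOf (g : G) = p ^ 2 := by
    have h7 := orderOf_injective (H none).subtype (Subgroup.subtype_injective _) g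
    rw [show (H none).subtype g = (g : G) from rfl] at h7
    rw [h7, orderOf_eq_card_of_forall_mem_zpowers hg, hC.2]
  have hne1 : (g : G) ^ p ≠ 1 := by
    intro h1
    have := orderOf_dvd_of_pow_eq_one h1
    rw [hog] at this
    have h8 : p ^ 2 ∣ p ^ 1 := by rw [pow_one]; exact this
    have := (Nat.pow_dvd_pow_iff_le_right hp.one_lt).mp h8
    omega
  -- the range of φ has cardinality p
  have hle : φ.range ≤ H none := fun x hx => (hrangeP hx).1
  have hcardR : Nat.card ↥(φ.range.subgroupOf (H none)) ∣ p := by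
    obtain ⟨r, hr⟩ := IsCyclic.exists_generator (α := ↥(φ.range.subgroupOf (H none)))
    rw [← orderOf_eq_card_of_forall_mem_zpowers hr]
    have e1 : orderOf r = orderOf (((r : ↥(H none)) : G)) := by
      have a1 := orderOf_injective (φ.range.subgroupOf (H none)).subtype
        (Subgroup.subtype_injective _) r
      have a2 := orderOf_injective (H none).subtype (Subgroup.subtype_injective _)
        (r : ↥(H none))
      rw [show (φ.range.subgroupOf (H none)).subtype r = (r : ↥(H none)) from rfl] at a1
      rw [show (H none).subtype (r : ↥(H none)) = ((r : ↥(H none)) : G) from rfl] at a2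
      rw [← a1]; exact a2.symm
    have hmem : ((r : ↥(H none)) : G) ∈ φ.range := Subgroup.mem_subgroupOf.mp r.2
    rw [e1]
    exact orderOf_dvd_of_pow_eq_one (hrangeP hmem).2
  have hcardeq : Nat.card ↥φ.range = Nat.card ↥(φ.range.subgroupOf (H none)) :=
    Nat.card_congr (Subgroup.subgroupOfEquivOfLe hle).toEquiv.symm
  have hntriv : Nat.card ↥φ.range ≠ 1 := by
    intro h1
    have hbot : φ.range = ⊥ := (Subgroup.card_le_one_iff_eq_bot φ.range).mp (le_of_eq h1)
    have : (g : G) ^ p ∈ φ.range := ⟨(g : G), rfl⟩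
    rw [hbot, Subgroup.mem_bot] at this
    exact hne1 this
  have hcardrange : Nat.card ↥φ.range = p := by
    rcases (Nat.dvd_prime hp).mp (hcardeq ▸ hcardR) with h | h
    · exact absurd h hntriv
    · exact h
  -- the kernel has cardinality p^(2n+1)
  have hker : Nat.card ↥φ.ker = p ^ (2 * n + 1) := by
    have h1 : Nat.card G = Nat.card (G ⧸ φ.ker) * Nat.card ↥φ.ker :=
      Subgroup.card_eq_card_quotient_mul_card_subgroup _
    have h2 : Nat.card (G ⧸ φ.ker) = p := by
      rw [Nat.card_congr (QuotientGroup.quotientKerEquivRange φ).toEquiv, hcardrange]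
    rw [hcard, h2] at h1
    have h3 : p ^ (2 * n + 2) = p * p ^ (2 * n + 1) := by
      rw [← pow_succ']
    exact (Nat.eq_of_mul_eq_mul_left hp.pos (by rw [← h1, ← h3])).symm
  have hkermem : ∀ x : G, x ∈ φ.ker ↔ x ^ p = 1 := fun x => φ.mem_ker
  -- counting
  set A : Finset G := Finset.univ.filter (fun x => x ^ p = 1) with hA
  have hAcard : A.card = p ^ (2 * n + 1) := by
    rw [← hker, Nat.card_eq_fintype_card, Fintype.card_subtype]
    congr 1
    apply Finset.filter_congr
    intro x _
    simp [hkermem x]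
  have h1A : (1 : G) ∈ A := by simp [hA]
  have horder : ∀ x : G, orderOf x = p ↔ (x ^ p = 1 ∧ x ≠ 1) := by
    intro x
    constructor
    · intro h
      refine ⟨by rw [← h]; exact pow_orderOf_eq_one x, ?_⟩
      intro h1; rw [h1, orderOf_one] at h; exact hp.ne_one h.symm
    · rintro ⟨h1, h2⟩
      rcases (Nat.dvd_prime hp).mp (orderOf_dvd_of_pow_eq_one h1) with h | h
      · exact absurd (orderOf_eq_one_iff.mp h) h2
      · exact h
  have horder2 : ∀ x : G, orderOf x = p ^ 2 ↔ ¬ x ^ p = 1 := by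
    intro x
    constructor
    · intro h h1
      have := orderOf_dvd_of_pow_eq_one h1
      rw [h] at this
      have h8 : p ^ 2 ∣ p ^ 1 := by rw [pow_one]; exact this
      have := (Nat.pow_dvd_pow_iff_le_right hp.one_lt).mp h8
      omega
    · intro h1
      obtain ⟨k, hk2, hk⟩ := (Nat.dvd_prime_pow hp).mp (orderOf_dvd_of_pow_eq_one (hx2 x))
      interval_cases k
      · exact absurd (by rw [orderOf_eq_one_iff.mp hk, one_pow]) h1
      · exact absurd (by rw [pow_one] at hk; rw [← hk]; exact pow_orderOf_eq_one x) h1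
      · exact hk
  have hBeq : Finset.univ.filter (fun x : G => orderOf x = p) = A.erase 1 := by
    ext x
    simp only [Finset.mem_filter, Finset.mem_univ, true_and, Finset.mem_erase, hA, horder x]
    tauto
  have hCeq : Finset.univ.filter (fun x : G => orderOf x = p ^ 2) =
      Finset.univ.filter (fun x : G => ¬ x ^ p = 1) := by
    apply Finset.filter_congr
    intro x _
    simpa using horder2 x
  have hunivcard : (Finset.univ : Finset G).card = p ^ (2 * n + 2) := by
    rw [Finset.card_univ, ← Nat.card_eq_fintype_card, hcard]
  have hCcard : (Finset.univ.filter (fun x : G => ¬ x ^ p = 1)).card =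
      p ^ (2 * n + 2) - p ^ (2 * n + 1) := by
    rw [Finset.filter_not, Finset.card_sdiff_of_subset (Finset.filter_subset _ _), hunivcard, ← hA, hAcard]
  have hpow22 : p ^ (2 * n + 2) = p * p ^ (2 * n + 1) := by rw [← pow_succ']
  have hq1 : 1 ≤ p ^ (2 * n + 1) := Nat.one_le_pow _ _ hp.pos
  -- the three results
  have r1 : numOfOrder G p = p ^ (2 * n + 1) - 1 := by
    rw [numOfOrder, Nat.card_eq_fintype_card, Fintype.card_subtype, hBeq,
      Finset.card_erase_of_mem h1A, hAcard]
  have r2 : numOfOrder G (p ^ 2) = (p - 1) * p ^ (2 * n + 1) := by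
    rw [numOfOrder, Nat.card_eq_fintype_card, Fintype.card_subtype, hCeq, hCcard, hpow22,
      Nat.sub_mul, one_mul]
  have r3 : ∑ x : G, orderOf x =
      (p - 1) * p ^ (2 * n + 3) + p * (p ^ (2 * n + 1) - 1) + 1 := by
    rw [← Finset.sum_filter_add_sum_filter_not Finset.univ (fun x => x ^ p = 1) orderOf]
    have e1 : ∑ x ∈ Finset.univ.filter (fun x : G => x ^ p = 1), orderOf x =
        p * (p ^ (2 * n + 1) - 1) + 1 := by
      rw [← hA, ← Finset.sum_erase_add A _ h1A, orderOf_one]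
      congr 1
      have : ∀ x ∈ A.erase 1, orderOf x = p := by
        intro x hx
        rw [← hBeq] at hx
        exact (Finset.mem_filter.mp hx).2
      rw [Finset.sum_congr rfl this, Finset.sum_const, Finset.card_erase_of_mem h1A, hAcard,
        smul_eq_mul, mul_comm]
    have e2 : ∑ x ∈ Finset.univ.filter (fun x : G => ¬ x ^ p = 1), orderOf x =
        (p - 1) * p ^ (2 * n + 3) := by
      have : ∀ x ∈ Finset.univ.filter (fun x : G => ¬ x ^ p = 1), orderOf x = p ^ 2 := by
        intro x hx
        exact (horder2 x).mpr (Finset.mem_filter.mp hx).2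
      have e3 : p ^ (2 * n + 3) = p ^ (2 * n + 1) * p ^ 2 := by rw [← pow_add]
      rw [Finset.sum_congr rfl this, Finset.sum_const, hCcard, smul_eq_mul, hpow22, e3,
        show p * p ^ (2 * n + 1) - p ^ (2 * n + 1) = (p - 1) * p ^ (2 * n + 1) from by
          rw [Nat.sub_mul, one_mul],
        mul_assoc]
    rw [e1, e2]
    generalize p * (p ^ (2 * n + 1) - 1) = a
    generalize (p - 1) * p ^ (2 * n + 3) = b
    omega
  exact ⟨r1, r2, r3⟩
end
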